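/- arXiv:2104.00257 — 4 statements merged into one kernel-verified Lean document; each statement's English description precedes it below -/
import Mathlib

section
/- Let n ≥ k ≥ 1. Suppose A, B ∈ ℂ^{n×n} are Hermitian, B is positive definite, with joint eigen-decomposition Uᴴ A U = diag(λ₁,…,λₙ), Uᴴ B U = Iₙ where U is invertible and λ₁ ≤ … ≤ λₙ, and suppose D ∈ ℂ^{k×k} is Hermitian with unitary eigen-decomposition Qᴴ D Q = diag(ω₁,…,ω_k), ω₁ ≥ … ≥ ω_k, and ω_i ≥ 0 for i ≤ ℓ, ω_i ≤ 0 for i > ℓ. Then for every X ∈ ℂ^{n×k} with Xᴴ B X = I_k the trace of D Xᴴ A X is a real number, and the real number Σ_{i=1}^{ℓ} ω_i λ_i + Σ_{i=ℓ+1}^{k} ω_i λ_{i+n−k} is the minimum (i.e., it is a lower bound and it is attained) of the set { t ∈ ℝ : ∃ X ∈ ℂ^{n×k}, Xᴴ B X = I_k and trace(D Xᴴ A X) = t }. -/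
/-!
Writing `X = U Z Qᴴ` turns the constraint into `Zᴴ Z = 1` and the objective into
`∑ i, ω i * ∑ j, λ j * |Z j i|²`. The matrix `S j i = |Z j i|²` has unit column sums and row sums
at most `1`, so adding `n - k` columns completes it to a doubly stochastic `n × n` matrix. Giving
the new columns weight `0` and inserting them between the nonnegative and the nonpositive `ω i`
keeps the weights decreasing. By Birkhoff's theorem the objective is then a convex combination of
sums `∑ m, ω' m * λ (π m)` over permutations `π`, each of which is at least `∑ m, ω' m * λ m` (the
claimed value) by the rearrangement inequality. The value is attained when the columns of `Z` are
the corresponding standard basis vectors.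
-/

open Matrix BigOperators
open scoped ComplexOrder

section Substochastic

variable {ι κ : Type*} [Fintype ι] [Fintype κ]

lemma Fintype.sum_extend_embedding {M : Type*} [AddCommMonoid M] [DecidableEq κ] (σ : ι ↪ κ)
    (f : ι → M) (g : κ → M) :
    ∑ m, Function.extend σ f g m = ∑ i, f i + ∑ m ∈ (Finset.univ.map σ)ᶜ, g m := by
  rw [← Finset.sum_add_sum_compl (Finset.univ.map σ), Finset.sum_map]
  congr 1
  · exact Finset.sum_congr rfl fun i _ => σ.injective.extend_apply f g i
  · refine Finset.sum_congr rfl fun m hm => Function.extend_apply' f g m ?_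
    rintro ⟨i, rfl⟩
    simp at hm

lemma extend_zero_dotProduct (σ : ι ↪ κ) (ω : ι → ℝ) (v : κ → ℝ) :
    Function.extend σ ω 0 ⬝ᵥ v = ω ⬝ᵥ (v ∘ σ) := by
  classical
  have hpointwise : (fun m => Function.extend σ ω 0 m * v m) =
      Function.extend σ (fun i => ω i * v (σ i)) 0 := by
    funext m
    by_cases hm : ∃ i, σ i = m
    · obtain ⟨i, rfl⟩ := hm
      simp only [σ.injective.extend_apply]
    · simp only [Function.extend_apply' _ _ _ hm, Pi.zero_apply, zero_mul]
  simp only [dotProduct, hpointwise, Fintype.sum_extend_embedding, Pi.zero_apply,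
    Finset.sum_const_zero, add_zero, Function.comp_apply]

variable [DecidableEq κ]

lemma mem_doublyStochastic_of_sum_col_eq_one_of_sum_row_le_one {M : Matrix κ κ ℝ}
    (h0 : ∀ i j, 0 ≤ M i j) (hcol : ∀ j, ∑ i, M i j = 1) (hrow : ∀ i, ∑ j, M i j ≤ 1) :
    M ∈ doublyStochastic ℝ κ := by
  have htotal : ∑ i, ∑ j, M i j = ∑ _i : κ, (1 : ℝ) :=
    Finset.sum_comm.trans (Finset.sum_congr rfl fun j _ => hcol j)
  have hrow_eq := (Finset.sum_eq_sum_iff_of_le fun i _ => hrow i).mp htotal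
  exact mem_doublyStochastic_iff_sum.mpr ⟨h0, fun i => hrow_eq i (Finset.mem_univ i), hcol⟩

lemma exists_mem_doublyStochastic_submatrix_eq (σ : ι ↪ κ) {S : Matrix κ ι ℝ}
    (h0 : ∀ j i, 0 ≤ S j i) (hcol : ∀ i, ∑ j, S j i = 1) (hrow : ∀ j, ∑ i, S j i ≤ 1) :
    ∃ M ∈ doublyStochastic ℝ κ, M.submatrix id σ = S := by
  set gap : ℝ := Fintype.card κ - Fintype.card ι
  have hcard_gap : ((Finset.univ.map σ)ᶜ.card : ℝ) = gap := by
    rw [Finset.card_compl, Finset.card_map, Finset.card_univ,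
      Nat.cast_sub (Fintype.card_le_of_embedding σ)]
  -- row `j` is topped up to sum `1` by spreading `1 - ∑ i, S j i` evenly over the `gap` columns
  -- outside the range of `σ`
  let M : Matrix κ κ ℝ := of fun j => Function.extend σ (S j) fun _ => (1 - ∑ i, S j i) / gap
  have hgap0 : 0 ≤ gap := sub_nonneg.mpr (by exact_mod_cast Fintype.card_le_of_embedding σ)
  refine ⟨M, mem_doublyStochastic_of_sum_col_eq_one_of_sum_row_le_one ?_ ?_ ?_, ?_⟩
  · intro j m
    by_cases hm : ∃ i, σ i = m
    · obtain ⟨i, rfl⟩ := hm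
      simpa [M, σ.injective.extend_apply] using h0 j i
    · simpa [M, Function.extend_apply' _ _ _ hm] using
        div_nonneg (sub_nonneg.mpr (hrow j)) hgap0
  · intro m
    by_cases hm : ∃ i, σ i = m
    · obtain ⟨i, rfl⟩ := hm
      simpa [M, σ.injective.extend_apply] using hcol i
    · have hlt : Fintype.card ι < Fintype.card κ :=
        Fintype.card_lt_of_injective_not_surjective σ σ.injective fun h => hm (h m)
      have hgap : gap ≠ 0 := sub_ne_zero.mpr (by exact_mod_cast hlt.ne')
      have htotal : ∑ j, ∑ i, S j i = Fintype.card ι :=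
        (Finset.sum_comm.trans (Finset.sum_congr rfl fun i _ => hcol i)).trans (by simp)
      simp only [M, of_apply, Function.extend_apply' _ _ _ hm, ← Finset.sum_div,
        Finset.sum_sub_distrib, htotal, Finset.sum_const, Finset.card_univ, nsmul_eq_mul, mul_one]
      exact div_self hgap
  · intro j
    simp only [M, of_apply, Fintype.sum_extend_embedding, Finset.sum_const, nsmul_eq_mul,
      hcard_gap]
    rcases hgap0.eq_or_lt with hgap | hgap
    · simpa [← hgap] using hrow j
    · rw [mul_div_cancel₀ _ hgap.ne']; linarith
  · ext j i
    simp [M, σ.injective.extend_apply]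

lemma dotProduct_le_dotProduct_vecMul_of_mem_doublyStochastic {M : Matrix κ κ ℝ}
    (hM : M ∈ doublyStochastic ℝ κ) {f g : κ → ℝ} (hfg : Antivary f g) :
    f ⬝ᵥ g ≤ f ⬝ᵥ (g ᵥ* M) := by
  have hconvex : Convex ℝ {M : Matrix κ κ ℝ | f ⬝ᵥ g ≤ f ⬝ᵥ (g ᵥ* M)} := by
    intro M hM N hN a b ha hb hab
    simp only [Set.mem_ofPred_eq, vecMul_add, vecMul_smul, dotProduct_add, dotProduct_smul,
      smul_eq_mul] at hM hN ⊢
    have hsplit : f ⬝ᵥ g = a * (f ⬝ᵥ g) + b * (f ⬝ᵥ g) := by rw [← add_mul, hab, one_mul]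
    linarith [mul_le_mul_of_nonneg_left hM ha, mul_le_mul_of_nonneg_left hN hb]
  rw [← SetLike.mem_coe, doublyStochastic_eq_convexHull_permMatrix] at hM
  refine convexHull_min ?_ hconvex hM
  rintro _ ⟨π, rfl⟩
  simpa only [Set.mem_ofPred_eq, vecMul_permMatrix, dotProduct, Function.comp_apply]
    using hfg.sum_mul_le_sum_mul_comp_perm (σ := π.symm)

lemma dotProduct_comp_le_dotProduct_vecMul (σ : ι ↪ κ) {ω : ι → ℝ} {g : κ → ℝ}
    (hωg : Antivary (Function.extend σ ω 0) g) {S : Matrix κ ι ℝ}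
    (h0 : ∀ j i, 0 ≤ S j i) (hcol : ∀ i, ∑ j, S j i = 1) (hrow : ∀ j, ∑ i, S j i ≤ 1) :
    ω ⬝ᵥ (g ∘ σ) ≤ ω ⬝ᵥ (g ᵥ* S) := by
  obtain ⟨M, hM, rfl⟩ := exists_mem_doublyStochastic_submatrix_eq σ h0 hcol hrow
  calc ω ⬝ᵥ (g ∘ σ) = Function.extend σ ω 0 ⬝ᵥ g := (extend_zero_dotProduct σ ω g).symm
    _ ≤ Function.extend σ ω 0 ⬝ᵥ (g ᵥ* M) :=
      dotProduct_le_dotProduct_vecMul_of_mem_doublyStochastic hM hωg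
    _ = ω ⬝ᵥ (g ᵥ* M.submatrix id σ) := by
      rw [extend_zero_dotProduct]
      rfl

end Substochastic

def gapEmbedding {k n : ℕ} (ℓ : ℕ) (hkn : k ≤ n) : Fin k ↪o Fin n :=
  OrderEmbedding.ofStrictMono
    (fun i => if (i : ℕ) < ℓ then Fin.castLE hkn i else (⟨i + n - k, by omega⟩ : Fin n))
    fun i j hij => by
      rw [Fin.lt_def] at hij
      dsimp only
      split_ifs <;> rw [Fin.lt_def] <;> simp <;> omega

lemma gapEmbedding_apply {k n : ℕ} (ℓ : ℕ) (hkn : k ≤ n) (i : Fin k) :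
    gapEmbedding ℓ hkn i =
      if (i : ℕ) < ℓ then Fin.castLE hkn i else (⟨i + n - k, by omega⟩ : Fin n) :=
  rfl

lemma gapEmbedding_val {k n : ℕ} (ℓ : ℕ) (hkn : k ≤ n) (i : Fin k) :
    (gapEmbedding ℓ hkn i : ℕ) = if (i : ℕ) < ℓ then (i : ℕ) else i + n - k := by
  rw [gapEmbedding_apply]
  split_ifs <;> rfl

lemma lt_of_gapEmbedding_lt_of_notMem_range {k n ℓ : ℕ} {hkn : k ≤ n} {i : Fin k} {m : Fin n}
    (hm : m ∉ Set.range (gapEmbedding ℓ hkn)) (him : gapEmbedding ℓ hkn i < m) : (i : ℕ) < ℓ := by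
  by_contra hi
  rw [Fin.lt_def, gapEmbedding_val, if_neg hi] at him
  refine hm ⟨⟨m + k - n, by omega⟩, Fin.ext ?_⟩
  rw [gapEmbedding_val, if_neg (by simp; omega)]
  simp; omega

lemma le_of_lt_gapEmbedding_of_notMem_range {k n ℓ : ℕ} {hkn : k ≤ n} {i : Fin k} {m : Fin n}
    (hm : m ∉ Set.range (gapEmbedding ℓ hkn)) (hmi : m < gapEmbedding ℓ hkn i) : ℓ ≤ (i : ℕ) := by
  by_contra hi
  rw [Fin.lt_def, gapEmbedding_val, if_pos (not_le.mp hi)] at hmi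
  refine hm ⟨⟨m, by omega⟩, Fin.ext ?_⟩
  rw [gapEmbedding_val, if_pos (by simp; omega)]

lemma antitone_extend_zero {ι κ : Type*} [LinearOrder ι] [LinearOrder κ] (σ : ι ↪o κ)
    {ω : ι → ℝ} (hω : Antitone ω)
    (hpos : ∀ i m, m ∉ Set.range σ → σ i < m → 0 ≤ ω i)
    (hneg : ∀ i m, m ∉ Set.range σ → m < σ i → ω i ≤ 0) :
    Antitone (Function.extend σ ω 0) := by
  intro a b hab
  by_cases ha : ∃ i, σ i = a <;> by_cases hb : ∃ j, σ j = b
  · obtain ⟨i, rfl⟩ := ha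
    obtain ⟨j, rfl⟩ := hb
    simpa only [σ.injective.extend_apply] using hω (σ.le_iff_le.mp hab)
  · obtain ⟨i, rfl⟩ := ha
    rw [σ.injective.extend_apply, Function.extend_apply' _ _ _ hb]
    exact hpos i b hb (hab.lt_of_ne fun h => hb ⟨i, h⟩)
  · obtain ⟨j, rfl⟩ := hb
    rw [σ.injective.extend_apply, Function.extend_apply' _ _ _ ha]
    exact hneg j a ha (hab.lt_of_ne fun h => ha ⟨j, h.symm⟩)
  · rw [Function.extend_apply' _ _ _ ha, Function.extend_apply' _ _ _ hb]
    exact le_rfl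

section Isometry

variable {m n : Type*} [Fintype n]

lemma conjTranspose_mul_mul_submatrix_one [DecidableEq n] (σ : m → n) (M : Matrix n n ℂ) :
    ((1 : Matrix n n ℂ).submatrix id σ)ᴴ * M * (1 : Matrix n n ℂ).submatrix id σ =
      M.submatrix σ σ := by
  ext i i'
  simp [mul_apply, one_apply]

variable [DecidableEq m]

lemma sum_normSq_apply_eq_one_of_conjTranspose_mul_self_eq_one {Z : Matrix n m ℂ}
    (hZ : Zᴴ * Z = 1) (i : m) : ∑ j, Complex.normSq (Z j i) = 1 := by
  have hii := congrFun (congrFun hZ i) i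
  simp only [mul_apply, conjTranspose_apply, one_apply_eq, Complex.star_def,
    ← Complex.normSq_eq_conj_mul_self] at hii
  exact_mod_cast hii

lemma conjTranspose_mul_submatrix_one_self [DecidableEq n] {σ : m → n} (hσ : Function.Injective σ) :
    ((1 : Matrix n n ℂ).submatrix id σ)ᴴ * (1 : Matrix n n ℂ).submatrix id σ = 1 := by
  simpa [submatrix_one _ hσ] using conjTranspose_mul_mul_submatrix_one σ (1 : Matrix n n ℂ)

variable [Fintype m] [DecidableEq n]

lemma sum_normSq_apply_le_one_of_conjTranspose_mul_self_eq_one {Z : Matrix n m ℂ}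
    (hZ : Zᴴ * Z = 1) (j : n) : ∑ i, Complex.normSq (Z j i) ≤ 1 := by
  -- `1 - Z Zᴴ` is an orthogonal projection, hence positive semidefinite
  have hproj : (1 - Z * Zᴴ)ᴴ * (1 - Z * Zᴴ) = 1 - Z * Zᴴ := by
    have hidem : Z * Zᴴ * (Z * Zᴴ) = Z * Zᴴ := by
      rw [Matrix.mul_assoc, ← Matrix.mul_assoc Zᴴ, hZ, Matrix.one_mul]
    simp only [conjTranspose_sub, conjTranspose_one, conjTranspose_mul,
      conjTranspose_conjTranspose, sub_mul, mul_sub, Matrix.one_mul, Matrix.mul_one, hidem]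
    abel
  have hjj := (hproj ▸ posSemidef_conjTranspose_mul_self (1 - Z * Zᴴ)).diag_nonneg (i := j)
  simp only [Matrix.sub_apply, one_apply_eq, mul_apply, conjTranspose_apply, Complex.star_def,
    Complex.mul_conj] at hjj
  exact_mod_cast sub_nonneg.mp hjj

lemma trace_diagonal_mul_conjTranspose_mul_diagonal_mul (Z : Matrix n m ℂ) (ω : m → ℝ)
    (lam : n → ℝ) :
    trace (diagonal (fun i => (ω i : ℂ)) * (Zᴴ * diagonal (fun j => (lam j : ℂ)) * Z)) =
      ((ω ⬝ᵥ (lam ᵥ* Z.map Complex.normSq) : ℝ) : ℂ) := by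
  have hdiag : ∀ i, (Zᴴ * diagonal (fun j => (lam j : ℂ)) * Z) i i =
      ∑ j, lam j * (Complex.normSq (Z j i) : ℂ) := by
    intro i
    rw [mul_apply]
    refine Finset.sum_congr rfl fun j _ => ?_
    rw [mul_diagonal, conjTranspose_apply, Complex.star_def, Complex.normSq_eq_conj_mul_self]
    ring
  simp only [trace, Matrix.diag_apply, diagonal_mul, hdiag, dotProduct, vecMul, map_apply]
  push_cast
  rfl

lemma dotProduct_comp_le_dotProduct_vecMul_map_normSq (σ : m ↪ n) {ω : m → ℝ} {g : n → ℝ}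
    (hωg : Antivary (Function.extend σ ω 0) g) {Z : Matrix n m ℂ} (hZ : Zᴴ * Z = 1) :
    ω ⬝ᵥ (g ∘ σ) ≤ ω ⬝ᵥ (g ᵥ* Z.map Complex.normSq) :=
  dotProduct_comp_le_dotProduct_vecMul σ hωg (fun _ _ => Complex.normSq_nonneg _)
    (sum_normSq_apply_eq_one_of_conjTranspose_mul_self_eq_one hZ)
    (sum_normSq_apply_le_one_of_conjTranspose_mul_self_eq_one hZ)

end Isometry

lemma exists_trace_eq_iff_exists_isometry_trace_eq {m n : Type*} [Fintype m] [Fintype n]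
    [DecidableEq m] [DecidableEq n] {A B U Λ : Matrix n n ℂ} {D Q Ω : Matrix m m ℂ}
    (hUA : Uᴴ * A * U = Λ) (hUB : Uᴴ * B * U = 1) (hQ : Qᴴ * Q = 1) (hQD : Qᴴ * D * Q = Ω)
    (t : ℂ) :
    (∃ X : Matrix n m ℂ, Xᴴ * B * X = 1 ∧ trace (D * (Xᴴ * A * X)) = t) ↔
      ∃ Z : Matrix n m ℂ, Zᴴ * Z = 1 ∧ trace (Ω * (Zᴴ * Λ * Z)) = t := by
  have hQQ : Q * Qᴴ = 1 := mul_eq_one_comm.mp hQ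
  have hUUB : U * (Uᴴ * B) = 1 := mul_eq_one_comm.mp hUB
  have hconj (Z : Matrix n m ℂ) (M : Matrix n n ℂ) :
      (U * Z * Qᴴ)ᴴ * M * (U * Z * Qᴴ) = Q * (Zᴴ * (Uᴴ * M * U) * Z) * Qᴴ := by
    simp only [conjTranspose_mul, conjTranspose_conjTranspose, Matrix.mul_assoc]
  have hconstraint (Z : Matrix n m ℂ) : (U * Z * Qᴴ)ᴴ * B * (U * Z * Qᴴ) = 1 ↔ Zᴴ * Z = 1 := by
    rw [hconj, hUB, Matrix.mul_one]
    constructor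
    · intro h
      simpa [Matrix.mul_assoc, hQ, ← Matrix.mul_assoc Qᴴ Q] using congrArg (Qᴴ * · * Q) h
    · intro h
      rw [h, Matrix.mul_one, hQQ]
  have htrace (Z : Matrix n m ℂ) :
      trace (D * ((U * Z * Qᴴ)ᴴ * A * (U * Z * Qᴴ))) = trace (Ω * (Zᴴ * Λ * Z)) := by
    have hD : D = Q * Ω * Qᴴ := by
      rw [← hQD, Matrix.mul_assoc, Matrix.mul_assoc, hQQ, Matrix.mul_one, ← Matrix.mul_assoc, hQQ,
        Matrix.one_mul]
    have hcancel : Q * Ω * Qᴴ * (Q * (Zᴴ * Λ * Z) * Qᴴ) = Q * (Ω * (Zᴴ * Λ * Z) * Qᴴ) := by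
      simp only [Matrix.mul_assoc, ← Matrix.mul_assoc Qᴴ Q, hQ, Matrix.one_mul]
    rw [hconj, hUA, hD, hcancel, trace_mul_comm, Matrix.mul_assoc, hQ, Matrix.mul_one]
  constructor
  · rintro ⟨X, hX, rfl⟩
    obtain ⟨Z, rfl⟩ : ∃ Z, X = U * Z * Qᴴ := ⟨Uᴴ * B * X * Q, by
      calc X = U * (Uᴴ * B) * X * (Q * Qᴴ) := by rw [hUUB, hQQ, Matrix.one_mul, Matrix.mul_one]
        _ = U * (Uᴴ * B * X * Q) * Qᴴ := by simp only [Matrix.mul_assoc]⟩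
    exact ⟨Z, (hconstraint Z).mp hX, (htrace Z).symm⟩
  · rintro ⟨Z, hZ, rfl⟩
    exact ⟨U * Z * Qᴴ, (hconstraint Z).mpr hZ, htrace Z⟩

/-- Theorem 2.1 of the paper (value part): for Hermitian `A`, positive definite `B`
with joint eigen-decomposition, and Hermitian `D` with ordered eigenvalues,
`trace (D Xᴴ A X)` is real on the constraint set `Xᴴ B X = I`, and
`∑_{i≤ℓ} ω_i λ_i + ∑_{i>ℓ} ω_i λ_{i+n-k}` is the minimum of its values. -/
theorem trace_min_posdef_B
    (n k ℓ : ℕ) (hkn : k ≤ n)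
    (A B : Matrix (Fin n) (Fin n) ℂ)
    (U : Matrix (Fin n) (Fin n) ℂ)
    (lam : Fin n → ℝ) (hlam : Monotone lam)
    (hUA : Uᴴ * A * U = Matrix.diagonal fun i => (lam i : ℂ))
    (hUB : Uᴴ * B * U = 1)
    (D : Matrix (Fin k) (Fin k) ℂ)
    (Q : Matrix (Fin k) (Fin k) ℂ) (hQ : Qᴴ * Q = 1)
    (ω : Fin k → ℝ) (hω : Antitone ω)
    (hQD : Qᴴ * D * Q = Matrix.diagonal fun i => (ω i : ℂ))
    (hωpos : ∀ i : Fin k, (i : ℕ) < ℓ → 0 ≤ ω i)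
    (hωneg : ∀ i : Fin k, ℓ ≤ (i : ℕ) → ω i ≤ 0) :
    (∀ X : Matrix (Fin n) (Fin k) ℂ, Xᴴ * B * X = 1 →
        ∃ t : ℝ, Matrix.trace (D * (Xᴴ * A * X)) = (t : ℂ)) ∧
    IsLeast {t : ℝ | ∃ X : Matrix (Fin n) (Fin k) ℂ,
        Xᴴ * B * X = 1 ∧ Matrix.trace (D * (Xᴴ * A * X)) = (t : ℂ)}
      (∑ i : Fin k, ω i *
        (if (i : ℕ) < ℓ then lam (Fin.castLE hkn i)
         else lam ⟨(i : ℕ) + n - k, by have := i.isLt; omega⟩)) := by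
  set σ := gapEmbedding ℓ hkn
  have hvalues := exists_trace_eq_iff_exists_isometry_trace_eq hUA hUB hQ hQD
  have htrace := trace_diagonal_mul_conjTranspose_mul_diagonal_mul (ω := ω) (lam := lam)
  have hantivary : Antivary (Function.extend σ ω 0) lam :=
    (antitone_extend_zero σ hω
      (fun i _ hm him => hωpos i (lt_of_gapEmbedding_lt_of_notMem_range hm him))
      (fun i _ hm hmi => hωneg i (le_of_lt_gapEmbedding_of_notMem_range hm hmi))).antivary hlam
  have htarget : ∑ i : Fin k, ω i * (if (i : ℕ) < ℓ then lam (Fin.castLE hkn i)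
      else lam ⟨(i : ℕ) + n - k, by have := i.isLt; omega⟩) = ω ⬝ᵥ (lam ∘ σ) := by
    simp only [dotProduct, Function.comp_apply, σ, gapEmbedding_apply, apply_ite lam]
  rw [htarget]
  refine ⟨fun X hX => ?_, ?_, ?_⟩
  · obtain ⟨Z, -, hZ⟩ := (hvalues _).mp ⟨X, hX, rfl⟩
    exact ⟨_, hZ.symm.trans (htrace Z)⟩
  · obtain ⟨X, hX, hXtr⟩ :=
      (hvalues _).mpr ⟨_, conjTranspose_mul_submatrix_one_self σ.injective, rfl⟩
    refine ⟨X, hX, hXtr.trans ?_⟩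
    rw [conjTranspose_mul_mul_submatrix_one, submatrix_diagonal _ _ σ.injective,
      diagonal_mul_diagonal, trace_diagonal]
    simp [dotProduct]
  · rintro t ⟨X, hX, hXtr⟩
    obtain ⟨Z, hZ, hZtr⟩ := (hvalues _).mp ⟨X, hX, hXtr⟩
    rw [htrace, Complex.ofReal_inj] at hZtr
    exact hZtr ▸ dotProduct_comp_le_dotProduct_vecMul_map_normSq σ.toEmbedding hantivary hZ
end

section
/- Let n ≥ k ≥ 1. Suppose A, B ∈ ℂ^{n×n} are Hermitian, B is positive definite, with joint eigen-decomposition Uᴴ A U = diag(λ₁,…,λₙ), Uᴴ B U = Iₙ where U is invertible and λ₁ ≤ … ≤ λₙ, and suppose D ∈ ℂ^{k×k} is Hermitian with unitary eigen-decomposition Qᴴ D Q = diag(ω₁,…,ω_k), ω₁ ≥ … ≥ ω_k, and ω_i ≥ 0 for i ≤ ℓ, ω_i ≤ 0 for i > ℓ. Then the real number Σ_{i=1}^{ℓ} ω_i λ_{n+1−i} + Σ_{i=ℓ+1}^{k} ω_i λ_{k−i+1} is the maximum (i.e., it is an upper bound and it is attained) of the set { t ∈ ℝ : ∃ X ∈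 ℂ^{n×k}, Xᴴ B X = I_k and trace(D Xᴴ A X) = t }. -/
open Matrix BigOperators Finset
open scoped ComplexOrder


lemma sum_Ico_rev (a b : ℕ) (f : ℕ → ℝ) :
    ∑ i ∈ Finset.Ico a b, f i = ∑ j ∈ Finset.range (b - a), f (b - 1 - j) := by
  rw [Finset.sum_Ico_eq_sum_range]
  rw [← Finset.sum_range_reflect]
  apply Finset.sum_congr rfl
  intro j hj
  simp only [Finset.mem_range] at hj
  congr 1
  omega

lemma abel_le (m : ℕ) (a s g : ℕ → ℝ)
    (ha : ∀ i j, i ≤ j → j < m → a j ≤ a i)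
    (ha0 : ∀ i, i < m → 0 ≤ a i)
    (hsg : ∀ j, j ≤ m → ∑ i ∈ Finset.range j, s i ≤ ∑ i ∈ Finset.range j, g i) :
    ∑ i ∈ Finset.range m, a i * s i ≤ ∑ i ∈ Finset.range m, a i * g i := by
  induction m generalizing a with
  | zero => simp
  | succ m ih =>
    set c := a m with hc
    have key : ∀ x : ℕ → ℝ, ∑ i ∈ range (m+1), a i * x i
        = (∑ i ∈ range m, (a i - c) * x i) + c * ∑ i ∈ range (m+1), x i := by
      intro x
      rw [Finset.mul_sum, Finset.sum_range_succ, Finset.sum_range_succ (fun i => c * x i),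
        Finset.sum_congr rfl (fun i _ => by ring : ∀ i ∈ range m, a i * x i = (a i - c) * x i + c * x i),
        Finset.sum_add_distrib]
      ring
    rw [key s, key g]
    have h1 : ∑ i ∈ range m, (a i - c) * s i ≤ ∑ i ∈ range m, (a i - c) * g i := by
      apply ih
      · intro i j hij hj; have := ha i j hij (by omega); linarith
      · intro i hi; have := ha i m (by omega) (by omega); linarith
      · intro j hj; exact hsg j (by omega)
    have h2 : c * ∑ i ∈ range (m+1), s i ≤ c * ∑ i ∈ range (m+1), g i :=
      mul_le_mul_of_nonneg_left (hsg (m+1) le_rfl) (ha0 m (by omega))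
    linarith

lemma threshold_le (S : Finset ℕ) (lam p q : ℕ → ℝ) (θ : ℝ)
    (hpq : ∑ j ∈ S, p j = ∑ j ∈ S, q j)
    (h : ∀ j ∈ S, (lam j - θ) * (p j - q j) ≤ 0) :
    ∑ j ∈ S, lam j * p j ≤ ∑ j ∈ S, lam j * q j := by
  have h1 : ∑ j ∈ S, (lam j - θ) * (p j - q j) ≤ 0 := Finset.sum_nonpos h
  have h2 : ∑ j ∈ S, (lam j - θ) * (p j - q j)
      = ∑ j ∈ S, lam j * p j - ∑ j ∈ S, lam j * q j - θ * (∑ j ∈ S, p j - ∑ j ∈ S, q j) := by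
    rw [mul_sub, Finset.mul_sum, Finset.mul_sum,
      ← Finset.sum_sub_distrib, ← Finset.sum_sub_distrib, ← Finset.sum_sub_distrib]
    exact Finset.sum_congr rfl (fun j _ => by ring)
  rw [h2, hpq] at h1
  linarith

lemma sum_indicator_ge (n c : ℕ) (hc : c ≤ n) :
    ∑ j ∈ range n, (if n - c ≤ j then (1:ℝ) else 0) = c := by
  rw [Finset.sum_boole]
  have : (range n).filter (fun j => n - c ≤ j) = Finset.Ico (n - c) n := by
    ext j; simp [Finset.mem_Ico]; omega
  rw [this, Nat.card_Ico]
  have : n - (n - c) = c := by omega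
  rw [this]

lemma sum_indicator_lt (n c : ℕ) (hc : c ≤ n) :
    ∑ j ∈ range n, (if j < c then (1:ℝ) else 0) = c := by
  rw [Finset.sum_boole]
  have : (range n).filter (fun j => j < c) = range c := by
    ext j; simp; omega
  rw [this, Finset.card_range]

lemma lp_upper (n c : ℕ) (hc : c ≤ n) (lam : ℕ → ℝ)
    (hlam : ∀ i j, i ≤ j → j < n → lam i ≤ lam j)
    (p : ℕ → ℝ) (hp0 : ∀ j, j < n → 0 ≤ p j) (hp1 : ∀ j, j < n → p j ≤ 1)
    (hps : ∑ j ∈ range n, p j = c) :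
    ∑ j ∈ range n, lam j * p j ≤ ∑ i ∈ range c, lam (n - 1 - i) := by
  rcases Nat.eq_zero_or_pos c with h0 | h0
  · subst h0
    have hz : ∀ j ∈ range n, p j = 0 := by
      rw [← Finset.sum_eq_zero_iff_of_nonneg (fun j hj => hp0 j (mem_range.mp hj))]
      simpa using hps
    simp only [range_zero, Finset.sum_empty]
    rw [Finset.sum_congr rfl (fun j hj => by rw [hz j hj, mul_zero])]
    simp
  · set q : ℕ → ℝ := fun j => if n - c ≤ j then 1 else 0 with hqdef
    have hq : ∑ j ∈ range n, q j = c := sum_indicator_ge n c hc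
    have key := threshold_le (range n) lam p q (lam (n - c)) (by rw [hps, hq]) ?_
    · refine key.trans (le_of_eq ?_)
      have e1 : ∑ j ∈ range n, lam j * q j = ∑ j ∈ Finset.Ico (n - c) n, lam j := by
        simp only [hqdef, mul_ite, mul_one, mul_zero]
        rw [Finset.sum_ite, Finset.sum_const_zero, add_zero]
        apply Finset.sum_congr
        · ext j; simp [Finset.mem_Ico]; omega
        · intros; rfl
      rw [e1, sum_Ico_rev]
      have : n - (n - c) = c := by omega
      rw [this]
    · intro j hj
      rw [mem_range] at hj
      by_cases hcase : n - c ≤ j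
      · have : q j = 1 := if_pos hcase
        rw [this]
        apply mul_nonpos_of_nonneg_of_nonpos
        · have := hlam (n - c) j hcase hj; linarith
        · have := hp1 j hj; linarith
      · have : q j = 0 := if_neg hcase
        rw [this]
        apply mul_nonpos_of_nonpos_of_nonneg
        · have := hlam j (n - c) (by omega) (by omega); linarith
        · have := hp0 j hj; linarith

lemma lp_lower (n c : ℕ) (hc : c ≤ n) (lam : ℕ → ℝ)
    (hlam : ∀ i j, i ≤ j → j < n → lam i ≤ lam j)
    (p : ℕ → ℝ) (hp0 : ∀ j, j < n → 0 ≤ p j) (hp1 : ∀ j, j < n → p j ≤ 1)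
    (hps : ∑ j ∈ range n, p j = c) :
    ∑ i ∈ range c, lam i ≤ ∑ j ∈ range n, lam j * p j := by
  rcases Nat.eq_zero_or_pos c with h0 | h0
  · subst h0
    have hz : ∀ j ∈ range n, p j = 0 := by
      rw [← Finset.sum_eq_zero_iff_of_nonneg (fun j hj => hp0 j (mem_range.mp hj))]
      simpa using hps
    simp only [range_zero, Finset.sum_empty]
    rw [Finset.sum_congr rfl (fun j hj => by rw [hz j hj, mul_zero])]
    simp
  · set q : ℕ → ℝ := fun j => if j < c then 1 else 0 with hqdef
    have hq : ∑ j ∈ range n, q j = c := sum_indicator_lt n c hc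
    have key := threshold_le (range n) lam q p (lam (c - 1)) (by rw [hps, hq]) ?_
    · refine le_trans (le_of_eq ?_) key
      have e1 : ∑ j ∈ range n, lam j * q j = ∑ j ∈ range c, lam j := by
        simp only [hqdef, mul_ite, mul_one, mul_zero]
        rw [Finset.sum_ite, Finset.sum_const_zero, add_zero]
        apply Finset.sum_congr
        · ext j; simp; omega
        · intros; rfl
      rw [e1]
    · intro j hj
      rw [mem_range] at hj
      by_cases hcase : j < c
      · have : q j = 1 := if_pos hcase
        rw [this]
        apply mul_nonpos_of_nonpos_of_nonneg
        · have := hlam j (c - 1) (by omega) (by omega); linarith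
        · have := hp1 j hj; linarith
      · have : q j = 0 := if_neg hcase
        rw [this]
        apply mul_nonpos_of_nonneg_of_nonpos
        · have := hlam (c - 1) j (by omega) hj; linarith
        · have := hp0 j hj; linarith

lemma core (n k ℓ : ℕ) (hkn : k ≤ n) (hℓ : ℓ ≤ k)
    (lam : ℕ → ℝ) (hlam : ∀ i j, i ≤ j → j < n → lam i ≤ lam j)
    (ω : ℕ → ℝ) (hω : ∀ i j, i ≤ j → j < k → ω j ≤ ω i)
    (hωpos : ∀ i, i < ℓ → 0 ≤ ω i) (hωneg : ∀ i, ℓ ≤ i → i < k → ω i ≤ 0)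
    (M : ℕ → ℕ → ℝ) (hM0 : ∀ j i, 0 ≤ M j i)
    (hcol : ∀ i, i < k → ∑ j ∈ range n, M j i = 1)
    (hrow : ∀ j, j < n → ∑ i ∈ range k, M j i ≤ 1) :
    ∑ i ∈ range k, ω i * ∑ j ∈ range n, lam j * M j i ≤
      ∑ i ∈ range k, ω i * (if i < ℓ then lam (n - 1 - i) else lam (k - 1 - i)) := by
  set s : ℕ → ℝ := fun i => ∑ j ∈ range n, lam j * M j i with hs
  have key : ∀ a b : ℕ, a ≤ b → b ≤ k →
      (∑ i ∈ range (b - a), lam i ≤ ∑ i ∈ Finset.Ico a b, s i ∧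
       ∑ i ∈ Finset.Ico a b, s i ≤ ∑ i ∈ range (b - a), lam (n - 1 - i)) := by
    intro a b hab hbk
    set p : ℕ → ℝ := fun j => ∑ i ∈ Finset.Ico a b, M j i with hp
    have hswap : ∑ i ∈ Finset.Ico a b, s i = ∑ j ∈ range n, lam j * p j := by
      rw [Finset.sum_comm]
      exact Finset.sum_congr rfl (fun j _ => (Finset.mul_sum _ _ _).symm)
    have hsub : Finset.Ico a b ⊆ range k := by
      intro x hx; rw [mem_range]; rw [Finset.mem_Ico] at hx; omega
    have hp0 : ∀ j, j < n → 0 ≤ p j :=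
      fun j _ => Finset.sum_nonneg (fun i _ => hM0 j i)
    have hp1 : ∀ j, j < n → p j ≤ 1 := by
      intro j hj
      exact le_trans (Finset.sum_le_sum_of_subset_of_nonneg hsub
        (fun i _ _ => hM0 j i)) (hrow j hj)
    have hps : ∑ j ∈ range n, p j = (b - a : ℕ) := by
      rw [Finset.sum_comm]
      rw [Finset.sum_congr rfl (fun i hi => hcol i (mem_range.mp (hsub hi)))]
      simp [Nat.card_Ico]
    have hc : b - a ≤ n := by omega
    rw [hswap]
    exact ⟨lp_lower n (b - a) hc lam hlam p hp0 hp1 hps,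
           lp_upper n (b - a) hc lam hlam p hp0 hp1 hps⟩
  have hsplit : ∀ f : ℕ → ℝ, ∑ i ∈ range k, f i
      = ∑ i ∈ range ℓ, f i + ∑ i ∈ Finset.Ico ℓ k, f i := by
    intro f
    rw [Finset.range_eq_Ico, ← Finset.sum_Ico_consecutive f (Nat.zero_le ℓ) hℓ,
      ← Finset.range_eq_Ico]
  rw [hsplit, hsplit]
  have part1 : ∑ i ∈ range ℓ, ω i * s i ≤
      ∑ i ∈ range ℓ, ω i * (if i < ℓ then lam (n - 1 - i) else lam (k - 1 - i)) := by
    have := abel_le ℓ ω s (fun i => lam (n - 1 - i))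
      (fun i j hij hj => hω i j hij (by omega)) hωpos ?_
    · refine this.trans (le_of_eq (Finset.sum_congr rfl ?_))
      intro i hi
      rw [mem_range] at hi
      rw [if_pos hi]
    · intro j hj
      have h2 := (key 0 j (Nat.zero_le _) (by omega)).2
      rw [← Finset.range_eq_Ico] at h2
      simpa using h2
  have part2 : ∑ i ∈ Finset.Ico ℓ k, ω i * s i ≤
      ∑ i ∈ Finset.Ico ℓ k, ω i * (if i < ℓ then lam (n - 1 - i) else lam (k - 1 - i)) := by
    have e1 : ∑ i ∈ Finset.Ico ℓ k, ω i * s i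
        = ∑ j ∈ range (k - ℓ), ω (k - 1 - j) * s (k - 1 - j) :=
      sum_Ico_rev ℓ k (fun i => ω i * s i)
    have e2 : ∑ i ∈ Finset.Ico ℓ k, ω i * (if i < ℓ then lam (n - 1 - i) else lam (k - 1 - i))
        = ∑ j ∈ range (k - ℓ), ω (k - 1 - j) * lam j := by
      rw [sum_Ico_rev]
      apply Finset.sum_congr rfl
      intro j hj
      rw [mem_range] at hj
      have h1 : ¬ (k - 1 - j < ℓ) := by omega
      rw [if_neg h1]
      have h2 : k - 1 - (k - 1 - j) = j := by omega
      rw [h2]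
    rw [e1, e2]
    have habel := abel_le (k - ℓ) (fun j => -ω (k - 1 - j)) lam (fun j => s (k - 1 - j)) ?_ ?_ ?_
    · simp only [neg_mul] at habel
      rw [Finset.sum_neg_distrib, Finset.sum_neg_distrib] at habel
      have e3 : ∑ i ∈ range (k - ℓ), ω (k - 1 - i) * s (k - 1 - i)
          = ∑ i ∈ range (k - ℓ), ω (k - 1 - i) * (fun j => s (k - 1 - j)) i := rfl
      linarith
    · intro i j hij hj
      have := hω (k - 1 - j) (k - 1 - i) (by omega) (by omega)
      linarith
    · intro i hi
      have := hωneg (k - 1 - i) (by omega) (by omega)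
      linarith
    · intro j hj
      have h2 := (key (k - j) k (by omega) le_rfl).1
      have h3 : k - (k - j) = j := by omega
      rw [h3] at h2
      refine h2.trans (le_of_eq ?_)
      rw [sum_Ico_rev]
      rw [h3]
  linarith

open Matrix BigOperators
open scoped ComplexOrder

lemma trace_diag_mul {m : ℕ} (d : Fin m → ℂ) (W : Matrix (Fin m) (Fin m) ℂ) :
    Matrix.trace (Matrix.diagonal d * W) = ∑ i, d i * W i i := by
  simp [Matrix.trace, Matrix.diag, Matrix.diagonal_mul]

/-- Corollary 2.2 of the paper (value part): the maximum of `trace (D Xᴴ A X)`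
subject to `Xᴴ B X = I` is `∑_{i≤ℓ} ω_i λ_{n+1-i} + ∑_{i>ℓ} ω_i λ_{k-i+1}`. -/
theorem trace_max_posdef_B
    (n k ℓ : ℕ) (hk : 1 ≤ k) (hkn : k ≤ n) (hℓ : ℓ ≤ k)
    (A B : Matrix (Fin n) (Fin n) ℂ) (hA : A.IsHermitian) (hB : B.PosDef)
    (U : Matrix (Fin n) (Fin n) ℂ) (hU : IsUnit U)
    (lam : Fin n → ℝ) (hlam : Monotone lam)
    (hUA : Uᴴ * A * U = Matrix.diagonal fun i => (lam i : ℂ))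
    (hUB : Uᴴ * B * U = 1)
    (D : Matrix (Fin k) (Fin k) ℂ) (hD : D.IsHermitian)
    (Q : Matrix (Fin k) (Fin k) ℂ) (hQ : Qᴴ * Q = 1)
    (ω : Fin k → ℝ) (hω : Antitone ω)
    (hQD : Qᴴ * D * Q = Matrix.diagonal fun i => (ω i : ℂ))
    (hωpos : ∀ i : Fin k, (i : ℕ) < ℓ → 0 ≤ ω i)
    (hωneg : ∀ i : Fin k, ℓ ≤ (i : ℕ) → ω i ≤ 0) :
    IsGreatest {t : ℝ | ∃ X : Matrix (Fin n) (Fin k) ℂ,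
        Xᴴ * B * X = 1 ∧ Matrix.trace (D * (Xᴴ * A * X)) = (t : ℂ)}
      (∑ i : Fin k, ω i *
        (if (i : ℕ) < ℓ then lam ⟨n - 1 - (i : ℕ), by omega⟩
         else lam ⟨k - 1 - (i : ℕ), by omega⟩)) := by
  have hQQ : Q * Qᴴ = 1 := mul_eq_one_comm.mp hQ
  have hUdet : IsUnit U.det := (Matrix.isUnit_iff_isUnit_det U).mp hU
  set V := U⁻¹ with hV
  have hUV : U * V = 1 := Matrix.mul_nonsing_inv U hUdet
  have hVUH : Vᴴ * Uᴴ = 1 := by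
    rw [← Matrix.conjTranspose_mul, hUV, Matrix.conjTranspose_one]
  set Λ : Matrix (Fin n) (Fin n) ℂ := Matrix.diagonal (fun i => (lam i : ℂ)) with hΛ
  set Ω : Matrix (Fin k) (Fin k) ℂ := Matrix.diagonal (fun i => (ω i : ℂ)) with hΩ
  have hconj : ∀ C : Matrix (Fin n) (Fin n) ℂ, C = Vᴴ * (Uᴴ * C * U) * V := by
    intro C
    have e : Vᴴ * (Uᴴ * C * U) * V = (Vᴴ * Uᴴ) * C * (U * V) := by
      simp only [Matrix.mul_assoc]
    rw [e, hVUH, hUV, one_mul, mul_one]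
  have hB' : B = Vᴴ * V := by
    have h := hconj B; rw [hUB, mul_one] at h; exact h
  have hA' : A = Vᴴ * Λ * V := by
    have h := hconj A; rw [hUA] at h; exact h
  constructor
  · -- membership : the maximum is attained
    have hσaux : ∀ i : Fin k, (i : ℕ) < ℓ → n - 1 - (i : ℕ) < n := fun i _ => by omega
    have hσaux2 : ∀ i : Fin k, k - 1 - (i : ℕ) < n := fun i => by have := i.isLt; omega
    set σ : Fin k → Fin n := fun i =>
      if h : (i : ℕ) < ℓ then ⟨n - 1 - (i : ℕ), hσaux i h⟩ else ⟨k - 1 - (i : ℕ), hσaux2 i⟩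
      with hσ
    have hσval : ∀ i : Fin k,
        (lam (σ i) : ℝ) = (if (i : ℕ) < ℓ then lam ⟨n - 1 - (i : ℕ), by omega⟩
          else lam ⟨k - 1 - (i : ℕ), by omega⟩) := by
      intro i
      by_cases h : (i : ℕ) < ℓ
      · rw [if_pos h, hσ]; simp only [dif_pos h]
      · rw [if_neg h, hσ]; simp only [dif_neg h]
    have hσinj : Function.Injective σ := by
      intro a b hab
      have h := congrArg Fin.val hab
      have ha2 := a.isLt
      have hb2 := b.isLt
      simp only [hσ] at h
      apply Fin.ext
      split_ifs at h with h1 h2 h3 <;> simp only at h <;> omega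
    set E : Matrix (Fin n) (Fin k) ℂ := Matrix.of (fun j i => if j = σ i then 1 else 0) with hE
    have hEE : Eᴴ * E = 1 := by
      ext i i'
      simp only [Matrix.mul_apply, Matrix.conjTranspose_apply, hE, Matrix.of_apply,
        Matrix.one_apply, apply_ite (star : ℂ → ℂ), star_one, star_zero, ite_mul, one_mul, zero_mul]
      rw [Finset.sum_ite_eq' Finset.univ (σ i) (fun j => if j = σ i' then (1:ℂ) else 0)]
      simp only [Finset.mem_univ, if_true]
      by_cases h : i = i'
      · subst h; simp
      · rw [if_neg (fun hh => h (hσinj hh)), if_neg h]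
    have hΛE : Λ * E = Matrix.of (fun j i => (lam j : ℂ) * if j = σ i then 1 else 0) := by
      ext j i
      rw [hΛ, Matrix.diagonal_mul]
      rfl
    have hELE : Eᴴ * Λ * E = Matrix.diagonal (fun i => (lam (σ i) : ℂ)) := by
      ext i i'
      rw [Matrix.mul_assoc, hΛE]
      simp only [Matrix.mul_apply, Matrix.conjTranspose_apply, hE, Matrix.of_apply]
      rw [Finset.sum_eq_single (σ i) (fun b _ hb => by rw [if_neg hb]; simp)
        (fun h => absurd (Finset.mem_univ _) h)]
      rw [if_pos rfl, star_one, one_mul]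
      by_cases h : i = i'
      · subst h; rw [if_pos rfl, mul_one, Matrix.diagonal_apply_eq]
      · rw [if_neg (fun hh => h (hσinj hh)), mul_zero, Matrix.diagonal_apply_ne _ h]
    refine ⟨U * E * Qᴴ, ?_, ?_⟩
    · have e : (U * E * Qᴴ)ᴴ * B * (U * E * Qᴴ) = Q * (Eᴴ * (Uᴴ * B * U) * E) * Qᴴ := by
        simp only [Matrix.conjTranspose_mul, Matrix.conjTranspose_conjTranspose, Matrix.mul_assoc]
      rw [e, hUB, Matrix.mul_one, hEE, Matrix.mul_one, hQQ]
    · have e : (U * E * Qᴴ)ᴴ * A * (U * E * Qᴴ) = Q * (Eᴴ * (Uᴴ * A * U) * E) * Qᴴ := by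
        simp only [Matrix.conjTranspose_mul, Matrix.conjTranspose_conjTranspose, Matrix.mul_assoc]
      rw [e, hUA, hELE]
      set G : Matrix (Fin k) (Fin k) ℂ := Matrix.diagonal (fun i => (lam (σ i) : ℂ)) with hG
      have e3 : D * (Q * G * Qᴴ) = (D * Q * G) * Qᴴ := by simp only [Matrix.mul_assoc]
      rw [e3, Matrix.trace_mul_comm]
      have e4 : Qᴴ * (D * Q * G) = (Qᴴ * D * Q) * G := by simp only [Matrix.mul_assoc]
      rw [e4, hQD, hΩ, trace_diag_mul]
      rw [show ∑ i : Fin k, (ω i : ℂ) * G i i = ((∑ i : Fin k, ω i * lam (σ i) : ℝ) : ℂ) by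
        push_cast
        exact Finset.sum_congr rfl (fun i _ => by rw [hG, Matrix.diagonal_apply_eq])]
      congr 1
      exact Finset.sum_congr rfl (fun i _ => by rw [hσval i])
  · -- upper bound
    rintro t ⟨X, hX1, hX2⟩
    set Z := V * X * Q with hZdef
    have hZ : Zᴴ * Z = 1 := by
      have e : Zᴴ * Z = Qᴴ * (Xᴴ * B * X) * Q := by
        rw [hB']
        simp only [hZdef, Matrix.conjTranspose_mul, Matrix.conjTranspose_conjTranspose,
          Matrix.mul_assoc]
      rw [e, hX1, Matrix.mul_one, hQ]
    have eXAX : Xᴴ * A * X = Q * (Zᴴ * Λ * Z) * Qᴴ := by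
      rw [hA']
      simp only [hZdef, Matrix.conjTranspose_mul, Matrix.conjTranspose_conjTranspose,
        Matrix.mul_assoc]
      rw [hQQ, Matrix.mul_one, ← Matrix.mul_assoc Q Qᴴ, hQQ, Matrix.one_mul]
    have etr : Matrix.trace (D * (Xᴴ * A * X)) = Matrix.trace (Ω * (Zᴴ * Λ * Z)) := by
      rw [eXAX]
      have e3 : D * (Q * (Zᴴ * Λ * Z) * Qᴴ) = (D * Q * (Zᴴ * Λ * Z)) * Qᴴ := by
        simp only [Matrix.mul_assoc]
      rw [e3, Matrix.trace_mul_comm]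
      have e4 : Qᴴ * (D * Q * (Zᴴ * Λ * Z)) = (Qᴴ * D * Q) * (Zᴴ * Λ * Z) := by
        simp only [Matrix.mul_assoc]
      rw [e4, hQD]
    have hdiagW : ∀ i : Fin k,
        (Zᴴ * Λ * Z) i i = ((∑ j : Fin n, lam j * Complex.normSq (Z j i) : ℝ) : ℂ) := by
      intro i
      rw [Matrix.mul_apply]
      push_cast
      refine Finset.sum_congr rfl (fun j _ => ?_)
      rw [hΛ, Matrix.mul_diagonal, Matrix.conjTranspose_apply]
      simp only [Complex.star_def]
      rw [Complex.normSq_eq_conj_mul_self]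
      try ring
    have htr2 : Matrix.trace (Ω * (Zᴴ * Λ * Z))
        = ((∑ i : Fin k, ω i * ∑ j : Fin n, lam j * Complex.normSq (Z j i) : ℝ) : ℂ) := by
      rw [hΩ, trace_diag_mul]
      push_cast
      exact Finset.sum_congr rfl (fun i _ => by rw [hdiagW i]; push_cast; ring)
    have ht' : t = ∑ i : Fin k, ω i * ∑ j : Fin n, lam j * Complex.normSq (Z j i) := by
      have h := hX2
      rw [etr, htr2] at h
      exact_mod_cast h.symm
    have hcol : ∀ i : Fin k, ∑ j : Fin n, Complex.normSq (Z j i) = 1 := by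
      intro i
      have h1 : (Zᴴ * Z) i i = 1 := by rw [hZ]; simp [Matrix.one_apply]
      rw [Matrix.mul_apply] at h1
      have h2 : ∑ j : Fin n, Zᴴ i j * Z j i
          = ((∑ j : Fin n, Complex.normSq (Z j i) : ℝ) : ℂ) := by
        push_cast
        refine Finset.sum_congr rfl (fun j _ => ?_)
        rw [Matrix.conjTranspose_apply]
        simp only [Complex.star_def]
        rw [Complex.normSq_eq_conj_mul_self]
        try ring
      rw [h2] at h1
      exact_mod_cast h1
    have hrow : ∀ j : Fin n, ∑ i : Fin k, Complex.normSq (Z j i) ≤ 1 := by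
      intro j
      set P := Z * Zᴴ with hP
      have hPP : P * P = P := by
        have e : P * P = Z * ((Zᴴ * Z) * Zᴴ) := by simp only [hP, Matrix.mul_assoc]
        rw [e, hZ, Matrix.one_mul]
      set r : ℝ := ∑ i : Fin k, Complex.normSq (Z j i) with hr
      have hPjj : P j j = (r : ℂ) := by
        rw [hP, Matrix.mul_apply, hr]
        push_cast
        refine Finset.sum_congr rfl (fun i _ => ?_)
        rw [Matrix.conjTranspose_apply]
        simp only [Complex.star_def]
        rw [Complex.normSq_eq_conj_mul_self]
        try ring
      have hPherm : ∀ l, P l j = (starRingEnd ℂ) (P j l) := by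
        intro l
        have hsym : Pᴴ = P := by
          rw [hP, Matrix.conjTranspose_mul, Matrix.conjTranspose_conjTranspose]
        conv_lhs => rw [← hsym]
        rw [Matrix.conjTranspose_apply]
        rfl
      have key : (r : ℂ) = ∑ l : Fin n, (Complex.normSq (P j l) : ℂ) := by
        rw [← hPjj]
        conv_lhs => rw [← hPP]
        rw [Matrix.mul_apply]
        refine Finset.sum_congr rfl (fun l _ => ?_)
        rw [hPherm l]
        rw [Complex.normSq_eq_conj_mul_self]
        try ring
      have key2 : r = ∑ l : Fin n, Complex.normSq (P j l) := by exact_mod_cast key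
      have hge : Complex.normSq (P j j) ≤ r := by
        rw [key2]
        exact Finset.single_le_sum (fun l _ => Complex.normSq_nonneg _) (Finset.mem_univ j)
      rw [hPjj, Complex.normSq_ofReal] at hge
      have hr0 : 0 ≤ r := Finset.sum_nonneg (fun i _ => Complex.normSq_nonneg _)
      nlinarith
    rw [ht']
    set lamN : ℕ → ℝ := fun j => if h : j < n then lam ⟨j, h⟩ else 0 with hlamN
    set ωN : ℕ → ℝ := fun i => if h : i < k then ω ⟨i, h⟩ else 0 with hωN
    set MN : ℕ → ℕ → ℝ := fun j i =>
      if h : j < n ∧ i < k then Complex.normSq (Z ⟨j, h.1⟩ ⟨i, h.2⟩) else 0 with hMN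
    have hcore := core n k ℓ hkn hℓ lamN
      (fun i j hij hj => by
        rw [hlamN]; simp only
        rw [dif_pos (by omega : i < n), dif_pos hj]
        exact hlam (Fin.mk_le_mk.mpr hij))
      ωN
      (fun i j hij hj => by
        rw [hωN]; simp only
        rw [dif_pos (by omega : i < k), dif_pos hj]
        exact hω (Fin.mk_le_mk.mpr hij))
      (fun i hi => by
        rw [hωN]; simp only
        rw [dif_pos (by omega : i < k)]
        exact hωpos _ hi)
      (fun i hi hik => by
        rw [hωN]; simp only
        rw [dif_pos hik]
        exact hωneg _ hi)
      MN
      (fun j i => by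
        rw [hMN]
        dsimp only
        split
        · exact Complex.normSq_nonneg _
        · exact le_refl 0)
      (fun i hi => by
        rw [← Fin.sum_univ_eq_sum_range (fun j => MN j i) n]
        rw [Finset.sum_congr rfl (fun (j : Fin n) (_ : j ∈ Finset.univ) =>
          (by rw [hMN]; exact dif_pos ⟨j.isLt, hi⟩ :
            MN (↑j) i = Complex.normSq (Z j ⟨i, hi⟩)))]
        exact hcol ⟨i, hi⟩)
      (fun j hj => by
        rw [← Fin.sum_univ_eq_sum_range (fun i => MN j i) k]
        rw [Finset.sum_congr rfl (fun (i : Fin k) (_ : i ∈ Finset.univ) =>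
          (by rw [hMN]; exact dif_pos ⟨hj, i.isLt⟩ :
            MN j (↑i) = Complex.normSq (Z ⟨j, hj⟩ i)))]
        exact hrow ⟨j, hj⟩)
    have conv1 : ∑ i ∈ Finset.range k, ωN i * ∑ j ∈ Finset.range n, lamN j * MN j i
        = ∑ i : Fin k, ω i * ∑ j : Fin n, lam j * Complex.normSq (Z j i) := by
      rw [← Fin.sum_univ_eq_sum_range (fun i => ωN i * ∑ j ∈ Finset.range n, lamN j * MN j i) k]
      refine Finset.sum_congr rfl (fun i _ => ?_)
      have h1 : ωN ↑i = ω i := by rw [hωN]; exact dif_pos i.isLt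
      rw [h1]
      congr 1
      rw [← Fin.sum_univ_eq_sum_range (fun j => lamN j * MN j ↑i) n]
      refine Finset.sum_congr rfl (fun j _ => ?_)
      have e1 : lamN ↑j = lam j := by rw [hlamN]; exact dif_pos j.isLt
      have e2 : MN ↑j ↑i = Complex.normSq (Z j i) := by
        rw [hMN]; exact dif_pos ⟨j.isLt, i.isLt⟩
      rw [e1, e2]
    have conv2 : ∑ i ∈ Finset.range k, ωN i * (if i < ℓ then lamN (n - 1 - i) else lamN (k - 1 - i))
        = ∑ i : Fin k, ω i * (if (i : ℕ) < ℓ then lam ⟨n - 1 - (i : ℕ), by omega⟩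
            else lam ⟨k - 1 - (i : ℕ), by omega⟩) := by
      rw [← Fin.sum_univ_eq_sum_range
        (fun i => ωN i * (if i < ℓ then lamN (n - 1 - i) else lamN (k - 1 - i))) k]
      refine Finset.sum_congr rfl (fun i _ => ?_)
      have h1 : ωN ↑i = ω i := by rw [hωN]; exact dif_pos i.isLt
      rw [h1]
      congr 1
      by_cases h : (i : ℕ) < ℓ
      · rw [if_pos h, if_pos h, hlamN]
        exact dif_pos (by omega : n - 1 - (i : ℕ) < n)
      · rw [if_neg h, if_neg h, hlamN]
        exact dif_pos (by have := i.isLt; omega : k - 1 - (i : ℕ) < n)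
    rw [← conv1, ← conv2]
    exact hcore
end

section
/- Let n ≥ k ≥ 1. Let A ∈ ℂ^{n×n} be Hermitian with eigenvalues λ₁ ≤ λ₂ ≤ … ≤ λₙ (listed in ascending order with multiplicity), and let D ∈ ℂ^{k×k} be Hermitian with eigenvalues ω₁ ≥ ω₂ ≥ … ≥ ω_k such that ω_i ≥ 0 for i ≤ ℓ and ω_i ≤ 0 for i > ℓ. Then for every X ∈ ℂ^{n×k} with Xᴴ X = I_k the trace of D Xᴴ A X is a real number, and the real number Σ_{i=1}^{ℓ} ω_i λ_i + Σ_{i=ℓ+1}^{k} ω_i λ_{i+n−k} is the minimum (a lower bound that is attained) of the set { t ∈ ℝ : ∃ X ∈ ℂ^{n×k}, Xᴴ X = I_k and trace(D Xᴴ A X) = t }. -/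
open Matrix BigOperators Finset
open scoped ComplexOrder

lemma abel_nonneg : ∀ (k : ℕ) (w b : ℕ → ℝ),
    (∀ i j, i ≤ j → j < k → w j ≤ w i) → (∀ i, i < k → 0 ≤ w i) →
    (∀ m, m ≤ k → 0 ≤ ∑ i ∈ range m, b i) →
    0 ≤ ∑ i ∈ range k, w i * b i := by
  intro k
  induction k with
  | zero => intro w b _ _ _; simp
  | succ k ih =>
    intro w b hanti hnn hps
    have h1 : ∑ i ∈ range (k+1), w i * b i
        = ∑ i ∈ range (k+1), (w i - w k) * b i + w k * ∑ i ∈ range (k+1), b i := by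
      rw [Finset.mul_sum, ← Finset.sum_add_distrib]
      apply Finset.sum_congr rfl
      intro i _; ring
    rw [h1]
    have h2 : ∑ i ∈ range (k+1), (w i - w k) * b i = ∑ i ∈ range k, (w i - w k) * b i := by
      rw [Finset.sum_range_succ]; simp
    have h3 : 0 ≤ ∑ i ∈ range k, (w i - w k) * b i := by
      apply ih
      · intro i j hij hj
        have := hanti i j hij (by omega); linarith
      · intro i hi
        have := hanti i k (by omega) (by omega); linarith
      · intro m hm; exact hps m (by omega)
    have h4 : 0 ≤ w k := hnn k (by omega)
    have h5 : 0 ≤ ∑ i ∈ range (k+1), b i := hps (k+1) le_rfl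
    rw [h2]
    nlinarith

lemma count_lt (n m : ℕ) (hmn : m ≤ n) :
    ∑ j : Fin n, (if (j : ℕ) < m then (1:ℝ) else 0) = m := by
  rw [Fin.sum_univ_eq_sum_range (fun j => if j < m then (1:ℝ) else 0) n]
  rw [← Finset.sum_filter]
  have : (range n).filter (· < m) = range m := by
    ext j; simp; omega
  rw [this]; simp

lemma count_ge (n m : ℕ) (hmn : m ≤ n) :
    ∑ j : Fin n, (if n - m ≤ (j : ℕ) then (1:ℝ) else 0) = m := by
  rw [Fin.sum_univ_eq_sum_range (fun j => if n - m ≤ j then (1:ℝ) else 0) n]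
  rw [← Finset.sum_filter]
  have : (range n).filter (fun j => n - m ≤ j) = Ico (n-m) n := by
    ext j; simp [Finset.mem_Ico]; omega
  rw [this, Finset.sum_const, Nat.card_Ico, nsmul_eq_mul, mul_one]; congr 1; omega

lemma threshold_min (n m : ℕ) (hm1 : 1 ≤ m) (hmn : m ≤ n)
    (lam : Fin n → ℝ) (hlam : Monotone lam) (r : Fin n → ℝ)
    (hr0 : ∀ j, 0 ≤ r j) (hr1 : ∀ j, r j ≤ 1) (hsum : ∑ j, r j = m) :
    ∑ j : Fin n, (if (j:ℕ) < m then lam j else 0) ≤ ∑ j, lam j * r j := by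
  set c0 : ℝ := lam ⟨m-1, by omega⟩ with hc0
  set t : Fin n → ℝ := fun j => if (j:ℕ) < m then (1:ℝ) else 0 with ht
  have key : ∀ j : Fin n, 0 ≤ (lam j - c0) * (r j - t j) := by
    intro j
    by_cases h : (j:ℕ) < m
    · have hl : lam j ≤ c0 := hlam (by simp [Fin.le_def]; omega)
      have : t j = 1 := by simp only [ht]; rw [if_pos h]
      rw [this]
      have := hr1 j
      nlinarith
    · have hl : c0 ≤ lam j := hlam (by simp [Fin.le_def]; omega)
      have : t j = 0 := by simp only [ht]; rw [if_neg h]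
      rw [this]
      have := hr0 j
      nlinarith
  have hkey : 0 ≤ ∑ j, (lam j - c0) * (r j - t j) := Finset.sum_nonneg fun j _ => key j
  have expand : ∑ j, (lam j - c0) * (r j - t j)
      = ∑ j, lam j * r j - ∑ j, lam j * t j - c0 * ∑ j, r j + c0 * ∑ j, t j := by
    rw [Finset.mul_sum, Finset.mul_sum, ← Finset.sum_sub_distrib, ← Finset.sum_sub_distrib,
      ← Finset.sum_add_distrib]
    apply Finset.sum_congr rfl; intro j _; ring
  have htsum : ∑ j, t j = m := count_lt n m hmn
  have hlt : ∑ j, lam j * t j = ∑ j : Fin n, (if (j:ℕ) < m then lam j else 0) := by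
    apply Finset.sum_congr rfl; intro j _
    simp [ht, mul_ite]
  rw [expand, htsum, hsum, hlt] at hkey
  linarith

lemma threshold_max (n m : ℕ) (hm1 : 1 ≤ m) (hmn : m ≤ n)
    (lam : Fin n → ℝ) (hlam : Monotone lam) (r : Fin n → ℝ)
    (hr0 : ∀ j, 0 ≤ r j) (hr1 : ∀ j, r j ≤ 1) (hsum : ∑ j, r j = m) :
    ∑ j, lam j * r j ≤ ∑ j : Fin n, (if n - m ≤ (j:ℕ) then lam j else 0) := by
  set c0 : ℝ := lam ⟨n-m, by omega⟩ with hc0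
  set t : Fin n → ℝ := fun j => if n - m ≤ (j:ℕ) then (1:ℝ) else 0 with ht
  have key : ∀ j : Fin n, 0 ≤ (lam j - c0) * (t j - r j) := by
    intro j
    by_cases h : n - m ≤ (j:ℕ)
    · have hl : c0 ≤ lam j := hlam (by simp [Fin.le_def]; omega)
      have : t j = 1 := by simp only [ht]; rw [if_pos h]
      rw [this]
      have := hr1 j
      nlinarith
    · have hl : lam j ≤ c0 := hlam (by simp [Fin.le_def]; omega)
      have : t j = 0 := by simp only [ht]; rw [if_neg h]
      rw [this]
      have := hr0 j
      nlinarith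
  have hkey : 0 ≤ ∑ j, (lam j - c0) * (t j - r j) := Finset.sum_nonneg fun j _ => key j
  have expand : ∑ j, (lam j - c0) * (t j - r j)
      = ∑ j, lam j * t j - ∑ j, lam j * r j - c0 * ∑ j, t j + c0 * ∑ j, r j := by
    rw [Finset.mul_sum, Finset.mul_sum, ← Finset.sum_sub_distrib, ← Finset.sum_sub_distrib,
      ← Finset.sum_add_distrib]
    apply Finset.sum_congr rfl; intro j _; ring
  have htsum : ∑ j, t j = m := count_ge n m hmn
  have hlt : ∑ j, lam j * t j = ∑ j : Fin n, (if n - m ≤ (j:ℕ) then lam j else 0) := by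
    apply Finset.sum_congr rfl; intro j _
    simp [ht, mul_ite]
  rw [expand, htsum, hsum, hlt] at hkey
  linarith

open Matrix
open scoped ComplexOrder


section KyFan

variable {n k : ℕ}

noncomputable def cN (lam : Fin n → ℝ) (s : Fin n → Fin k → ℝ) : ℕ → ℝ :=
  fun i => if h : i < k then ∑ j, lam j * s j ⟨i, h⟩ else 0

noncomputable def lamN (lam : Fin n → ℝ) : ℕ → ℝ :=
  fun j => if h : j < n then lam ⟨j, h⟩ else 0

lemma row_partial_le (s : Fin n → Fin k → ℝ) (hs0 : ∀ j i, 0 ≤ s j i)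
    (hrow : ∀ j, ∑ i, s j i ≤ 1) (j : Fin n) (T : Finset ℕ) (hT : T ⊆ range k) :
    ∑ i ∈ T, (if h : i < k then s j ⟨i, h⟩ else 0) ≤ 1 := by
  calc ∑ i ∈ T, (if h : i < k then s j ⟨i, h⟩ else 0)
      ≤ ∑ i ∈ range k, (if h : i < k then s j ⟨i, h⟩ else 0) := by
        apply Finset.sum_le_sum_of_subset_of_nonneg hT
        intro i _ _
        by_cases h : i < k
        · rw [dif_pos h]; exact hs0 j _
        · rw [dif_neg h]
    _ = ∑ i : Fin k, s j i := by
        rw [← Fin.sum_univ_eq_sum_range (fun i => if h : i < k then s j ⟨i, h⟩ else 0) k]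
        apply Finset.sum_congr rfl
        intro i _
        rw [dif_pos i.isLt]
    _ ≤ 1 := hrow j

lemma sum_nonneg_dite (s : Fin n → Fin k → ℝ) (hs0 : ∀ j i, 0 ≤ s j i) (j : Fin n) (i : ℕ) :
    0 ≤ (if h : i < k then s j ⟨i, h⟩ else 0) := by
  by_cases h : i < k
  · rw [dif_pos h]; exact hs0 j _
  · rw [dif_neg h]

lemma kyfan_min (hkn : k ≤ n) (lam : Fin n → ℝ) (hlam : Monotone lam)
    (s : Fin n → Fin k → ℝ) (hs0 : ∀ j i, 0 ≤ s j i)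
    (hcol : ∀ i, ∑ j, s j i = 1) (hrow : ∀ j, ∑ i, s j i ≤ 1)
    (m : ℕ) (hm : m ≤ k) :
    ∑ j ∈ range m, lamN lam j ≤ ∑ i ∈ range m, cN lam s i := by
  rcases Nat.eq_zero_or_pos m with rfl | hm1
  · simp
  set r : Fin n → ℝ := fun j => ∑ i ∈ range m, (if h : i < k then s j ⟨i, h⟩ else 0) with hr
  have hr0 : ∀ j, 0 ≤ r j := fun j =>
    Finset.sum_nonneg fun i _ => sum_nonneg_dite s hs0 j i
  have hr1 : ∀ j, r j ≤ 1 := fun j =>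
    row_partial_le s hs0 hrow j (range m) (by intro x hx; simp at hx ⊢; omega)
  have hrsum : ∑ j, r j = m := by
    rw [hr]
    show ∑ j : Fin n, ∑ i ∈ range m, _ = _
    rw [Finset.sum_comm]
    have : ∀ i ∈ range m, ∑ j : Fin n, (if h : i < k then s j ⟨i, h⟩ else 0) = 1 := by
      intro i hi
      simp at hi
      rw [Finset.sum_congr rfl (fun j _ => dif_pos (by omega : i < k))]
      exact hcol _
    rw [Finset.sum_congr rfl this]
    simp
  have h1 : (range n).filter (· < m) = range m := by ext x; simp; omega
  have lhs_eq : ∑ j ∈ range m, lamN lam j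
      = ∑ j : Fin n, (if (j:ℕ) < m then lam j else 0) := by
    calc ∑ j ∈ range m, lamN lam j
        = ∑ j ∈ range n, (if j < m then lamN lam j else 0) := by
          rw [← Finset.sum_filter, h1]
      _ = ∑ j : Fin n, (if (j:ℕ) < m then lamN lam (j:ℕ) else 0) :=
          (Fin.sum_univ_eq_sum_range (fun j => if j < m then lamN lam j else 0) n).symm
      _ = ∑ j : Fin n, (if (j:ℕ) < m then lam j else 0) := by
          apply Finset.sum_congr rfl
          intro j _
          by_cases h : (j:ℕ) < m
          · rw [if_pos h, if_pos h]; unfold lamN; rw [dif_pos j.isLt]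
          · rw [if_neg h, if_neg h]
  have rhs_eq : ∑ i ∈ range m, cN lam s i = ∑ j, lam j * r j := by
    calc ∑ i ∈ range m, cN lam s i
        = ∑ i ∈ range m, ∑ j : Fin n, lam j * (if h : i < k then s j ⟨i, h⟩ else 0) := by
          apply Finset.sum_congr rfl
          intro i hi
          simp at hi
          unfold cN
          rw [dif_pos (by omega : i < k)]
          apply Finset.sum_congr rfl
          intro j _
          rw [dif_pos (by omega : i < k)]
      _ = ∑ j : Fin n, ∑ i ∈ range m, lam j * (if h : i < k then s j ⟨i, h⟩ else 0) :=
          Finset.sum_comm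
      _ = ∑ j, lam j * r j := by
          apply Finset.sum_congr rfl
          intro j _
          rw [hr, Finset.mul_sum]
  rw [lhs_eq, rhs_eq]
  exact threshold_min n m hm1 (by omega) lam hlam r hr0 hr1 hrsum

lemma kyfan_max (hkn : k ≤ n) (lam : Fin n → ℝ) (hlam : Monotone lam)
    (s : Fin n → Fin k → ℝ) (hs0 : ∀ j i, 0 ≤ s j i)
    (hcol : ∀ i, ∑ j, s j i = 1) (hrow : ∀ j, ∑ i, s j i ≤ 1)
    (m : ℕ) (hm : m ≤ k) :
    ∑ i ∈ range m, cN lam s (k - m + i) ≤ ∑ i ∈ range m, lamN lam (n - m + i) := by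
  rcases Nat.eq_zero_or_pos m with rfl | hm1
  · simp
  set r : Fin n → ℝ := fun j => ∑ i ∈ range m, (if h : k - m + i < k then s j ⟨k - m + i, h⟩ else 0) with hr
  have hr0 : ∀ j, 0 ≤ r j := fun j =>
    Finset.sum_nonneg fun i _ => sum_nonneg_dite s hs0 j _
  have hr1 : ∀ j, r j ≤ 1 := by
    intro j
    have := row_partial_le s hs0 hrow j (Ico (k-m) k) (by intro x hx; simp [Finset.mem_Ico] at hx ⊢; omega)
    rw [Finset.sum_Ico_eq_sum_range] at this
    have hkm : k - (k - m) = m := by omega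
    rw [hkm] at this
    exact le_of_eq_of_le (by rw [hr]) this
  have hrsum : ∑ j, r j = m := by
    rw [hr]
    show ∑ j : Fin n, ∑ i ∈ range m, _ = _
    rw [Finset.sum_comm]
    have : ∀ i ∈ range m, ∑ j : Fin n, (if h : k - m + i < k then s j ⟨k - m + i, h⟩ else 0) = 1 := by
      intro i hi
      simp at hi
      rw [Finset.sum_congr rfl (fun j _ => dif_pos (by omega : k - m + i < k))]
      exact hcol _
    rw [Finset.sum_congr rfl this]
    simp
  have h1 : (range n).filter (fun j => n - m ≤ j) = Ico (n-m) n := by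
    ext x; simp [Finset.mem_Ico]; omega
  have rhs_eq : ∑ i ∈ range m, lamN lam (n - m + i)
      = ∑ j : Fin n, (if n - m ≤ (j:ℕ) then lam j else 0) := by
    calc ∑ i ∈ range m, lamN lam (n - m + i)
        = ∑ j ∈ Ico (n - m) n, lamN lam j := by
          rw [Finset.sum_Ico_eq_sum_range]
          have : n - (n - m) = m := by omega
          rw [this]
      _ = ∑ j ∈ range n, (if n - m ≤ j then lamN lam j else 0) := by
          rw [← Finset.sum_filter, h1]
      _ = ∑ j : Fin n, (if n - m ≤ (j:ℕ) then lamN lam (j:ℕ) else 0) :=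
          (Fin.sum_univ_eq_sum_range (fun j => if n - m ≤ j then lamN lam j else 0) n).symm
      _ = ∑ j : Fin n, (if n - m ≤ (j:ℕ) then lam j else 0) := by
          apply Finset.sum_congr rfl
          intro j _
          by_cases h : n - m ≤ (j:ℕ)
          · rw [if_pos h, if_pos h]; unfold lamN; rw [dif_pos j.isLt]
          · rw [if_neg h, if_neg h]
  have lhs_eq : ∑ i ∈ range m, cN lam s (k - m + i) = ∑ j, lam j * r j := by
    calc ∑ i ∈ range m, cN lam s (k - m + i)
        = ∑ i ∈ range m, ∑ j : Fin n, lam j * (if h : k - m + i < k then s j ⟨k - m + i, h⟩ else 0) := by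
          apply Finset.sum_congr rfl
          intro i hi
          simp at hi
          unfold cN
          rw [dif_pos (by omega : k - m + i < k)]
          apply Finset.sum_congr rfl
          intro j _
          rw [dif_pos (by omega : k - m + i < k)]
      _ = ∑ j : Fin n, ∑ i ∈ range m, lam j * (if h : k - m + i < k then s j ⟨k - m + i, h⟩ else 0) :=
          Finset.sum_comm
      _ = ∑ j, lam j * r j := by
          apply Finset.sum_congr rfl
          intro j _
          rw [hr, Finset.mul_sum]
  rw [lhs_eq, rhs_eq]
  exact threshold_max n m hm1 (by omega) lam hlam r hr0 hr1 hrsum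

end KyFan
lemma partial_reflect (k m : ℕ) (hm : m ≤ k) (f : ℕ → ℝ) :
    ∑ i ∈ range m, f (k - 1 - i) = ∑ i ∈ range m, f (k - m + i) := by
  have := Finset.sum_range_reflect (fun i => f (k - m + i)) m
  rw [← this]
  apply Finset.sum_congr rfl
  intro i hi
  simp at hi
  congr 1
  omega

lemma core_ineq {n k : ℕ} (ℓ : ℕ) (hk : 1 ≤ k) (hkn : k ≤ n) (hℓ : ℓ ≤ k)
    (lam : Fin n → ℝ) (hlam : Monotone lam)
    (ω : Fin k → ℝ) (hω : Antitone ω)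
    (hωpos : ∀ i : Fin k, (i : ℕ) < ℓ → 0 ≤ ω i)
    (hωneg : ∀ i : Fin k, ℓ ≤ (i : ℕ) → ω i ≤ 0)
    (s : Fin n → Fin k → ℝ) (hs0 : ∀ j i, 0 ≤ s j i)
    (hcol : ∀ i, ∑ j, s j i = 1) (hrow : ∀ j, ∑ i, s j i ≤ 1) :
    ∑ i ∈ range k,
      (if h : i < k then ω ⟨i, h⟩ else 0) *
        (if i < ℓ then lamN lam i else lamN lam (i + n - k))
    ≤ ∑ i ∈ range k, (if h : i < k then ω ⟨i, h⟩ else 0) * cN lam s i := by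
  set W : ℕ → ℝ := fun i => if h : i < k then ω ⟨i, h⟩ else 0 with hW
  set wpos : ℕ → ℝ := fun i => if i < ℓ then W i else 0 with hwpos
  set wneg : ℕ → ℝ := fun i => if i < ℓ then 0 else -W i with hwneg
  have hWmono : ∀ a b : ℕ, a ≤ b → b < k → W b ≤ W a := by
    intro a b hab hb
    rw [hW]
    simp only
    rw [dif_pos hb, dif_pos (by omega : a < k)]
    exact hω (by simp [Fin.le_def]; omega)
  -- first Abel sum
  have habel1 : 0 ≤ ∑ i ∈ range k, wpos i * (cN lam s i - lamN lam i) := by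
    apply abel_nonneg
    · intro i j hij hj
      rw [hwpos]
      simp only
      by_cases hjℓ : j < ℓ
      · rw [if_pos hjℓ, if_pos (by omega : i < ℓ)]
        exact hWmono i j hij hj
      · rw [if_neg hjℓ]
        by_cases hiℓ : i < ℓ
        · rw [if_pos hiℓ]
          rw [hW]; simp only; rw [dif_pos (by omega : i < k)]
          exact hωpos _ hiℓ
        · rw [if_neg hiℓ]
    · intro i hi
      rw [hwpos]; simp only
      by_cases hiℓ : i < ℓ
      · rw [if_pos hiℓ, hW]; simp only; rw [dif_pos hi]
        exact hωpos _ hiℓ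
      · rw [if_neg hiℓ]
    · intro m hm
      rw [Finset.sum_sub_distrib]
      have := kyfan_min hkn lam hlam s hs0 hcol hrow m hm
      linarith
  -- second Abel sum (reflected)
  have habel2 : 0 ≤ ∑ i ∈ range k, wneg i * (lamN lam (i + n - k) - cN lam s i) := by
    rw [← Finset.sum_range_reflect]
    apply abel_nonneg
    · intro i j hij hj
      rw [hwneg]; simp only
      have h1 : k - 1 - j ≤ k - 1 - i := by omega
      by_cases hb : k - 1 - i < ℓ
      · rw [if_pos hb, if_pos (by omega : k - 1 - j < ℓ)]
      · rw [if_neg hb]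
        by_cases ha : k - 1 - j < ℓ
        · rw [if_pos ha]
          have : ω ⟨k-1-i, by omega⟩ ≤ 0 := hωneg _ (by simpa using (by omega : ℓ ≤ k-1-i))
          rw [hW]; simp only; rw [dif_pos (by omega : k-1-i < k)]
          linarith
        · rw [if_neg ha]
          have := hWmono (k-1-j) (k-1-i) h1 (by omega)
          linarith
    · intro i hi
      rw [hwneg]; simp only
      by_cases hb : k - 1 - i < ℓ
      · rw [if_pos hb]
      · rw [if_neg hb]
        rw [hW]; simp only; rw [dif_pos (by omega : k-1-i < k)]
        have : ω ⟨k-1-i, by omega⟩ ≤ 0 := hωneg _ (by simpa using (by omega : ℓ ≤ k-1-i))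
        linarith
    · intro m hm
      have hrefl := partial_reflect k m hm (fun j => lamN lam (j + n - k) - cN lam s j)
      rw [hrefl]
      have e1 : ∑ i ∈ range m, (lamN lam (k - m + i + n - k) - cN lam s (k - m + i))
          = ∑ i ∈ range m, lamN lam (n - m + i) - ∑ i ∈ range m, cN lam s (k - m + i) := by
        rw [← Finset.sum_sub_distrib]
        apply Finset.sum_congr rfl
        intro i hi
        simp at hi
        congr 2
        omega
      rw [e1]
      have := kyfan_max hkn lam hlam s hs0 hcol hrow m hm
      linarith
  -- combine
  have hsplit : ∀ i ∈ range k,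
      W i * cN lam s i - W i * (if i < ℓ then lamN lam i else lamN lam (i + n - k))
      = wpos i * (cN lam s i - lamN lam i) + wneg i * (lamN lam (i + n - k) - cN lam s i) := by
    intro i hi
    rw [hwpos, hwneg]
    simp only
    by_cases h : i < ℓ
    · rw [if_pos h, if_pos h, if_pos h]; ring
    · rw [if_neg h, if_neg h, if_neg h]; ring
  have : 0 ≤ ∑ i ∈ range k,
      (W i * cN lam s i - W i * (if i < ℓ then lamN lam i else lamN lam (i + n - k))) := by
    rw [Finset.sum_congr rfl hsplit, Finset.sum_add_distrib]
    linarith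
  rw [Finset.sum_sub_distrib] at this
  linarith

lemma trace_formula {n k : ℕ}
    (A : Matrix (Fin n) (Fin n) ℂ)
    (U : Matrix (Fin n) (Fin n) ℂ) (hU : Uᴴ * U = 1)
    (lam : Fin n → ℝ)
    (hUA : Uᴴ * A * U = Matrix.diagonal fun i => (lam i : ℂ))
    (D : Matrix (Fin k) (Fin k) ℂ)
    (Q : Matrix (Fin k) (Fin k) ℂ) (hQ : Qᴴ * Q = 1)
    (ω : Fin k → ℝ)
    (hQD : Qᴴ * D * Q = Matrix.diagonal fun i => (ω i : ℂ))
    (X : Matrix (Fin n) (Fin k) ℂ) :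
    Matrix.trace (D * (Xᴴ * A * X)) =
      ((∑ i : Fin k, ω i * ∑ j : Fin n, lam j * Complex.normSq ((Uᴴ * X * Q) j i) : ℝ) : ℂ) := by
  have hUU : U * Uᴴ = 1 := mul_eq_one_comm.mp hU
  have hQQ : Q * Qᴴ = 1 := mul_eq_one_comm.mp hQ
  have hAeq : A = U * Matrix.diagonal (fun i => (lam i : ℂ)) * Uᴴ := by
    rw [← hUA]
    calc A = (U * Uᴴ) * A * (U * Uᴴ) := by rw [hUU, Matrix.one_mul, Matrix.mul_one]
    _ = U * (Uᴴ * A * U) * Uᴴ := by simp only [Matrix.mul_assoc]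
  have hDeq : D = Q * Matrix.diagonal (fun i => (ω i : ℂ)) * Qᴴ := by
    rw [← hQD]
    calc D = (Q * Qᴴ) * D * (Q * Qᴴ) := by rw [hQQ, Matrix.one_mul, Matrix.mul_one]
    _ = Q * (Qᴴ * D * Q) * Qᴴ := by simp only [Matrix.mul_assoc]
  set Z := Uᴴ * X * Q with hZ
  have key : D * (Xᴴ * A * X)
      = Q * ((Matrix.diagonal (fun i => (ω i : ℂ)) * (Zᴴ * Matrix.diagonal (fun i => (lam i : ℂ)) * Z)) * Qᴴ) := by
    rw [hZ]
    nth_rewrite 1 [hDeq, hAeq]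
    simp only [conjTranspose_mul, conjTranspose_conjTranspose, Matrix.mul_assoc, hQQ,
      Matrix.mul_one]
  rw [key]
  rw [← Matrix.mul_assoc, Matrix.trace_mul_cycle, ← Matrix.mul_assoc, hQ, Matrix.one_mul]
  have diag_app : ∀ (M : Matrix (Fin k) (Fin k) ℂ),
      Matrix.trace (Matrix.diagonal (fun i => (ω i : ℂ)) * M) = ∑ i, (ω i : ℂ) * M i i := by
    intro M
    rw [Matrix.trace]
    apply Finset.sum_congr rfl
    intro i _
    rw [Matrix.diag]
    rw [Matrix.diagonal_mul]
  rw [diag_app]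
  have Mii : ∀ i, (Zᴴ * Matrix.diagonal (fun j => (lam j : ℂ)) * Z) i i
      = ∑ j, (lam j : ℂ) * (Complex.normSq (Z j i) : ℂ) := by
    intro i
    rw [Matrix.mul_apply]
    apply Finset.sum_congr rfl
    intro j _
    rw [Matrix.mul_diagonal, Matrix.conjTranspose_apply]
    have hsq : star (Z j i) * Z j i = (Complex.normSq (Z j i) : ℂ) := by
      rw [Complex.star_def, mul_comm, Complex.mul_conj]
    calc star (Z j i) * (lam j : ℂ) * Z j i
        = (lam j : ℂ) * (star (Z j i) * Z j i) := by ring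
      _ = (lam j : ℂ) * (Complex.normSq (Z j i) : ℂ) := by rw [hsq]
  push_cast
  apply Finset.sum_congr rfl
  intro i _
  rw [Mii]

lemma col_sums {n k : ℕ} (Z : Matrix (Fin n) (Fin k) ℂ) (hZZ : Zᴴ * Z = 1) :
    ∀ i, ∑ j, Complex.normSq (Z j i) = 1 := by
  intro i
  have h := congrFun (congrFun hZZ i) i
  rw [Matrix.mul_apply] at h
  have e : ∑ j, Zᴴ i j * Z j i = ((∑ j, Complex.normSq (Z j i) : ℝ) : ℂ) := by
    push_cast
    apply Finset.sum_congr rfl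
    intro j _
    rw [Matrix.conjTranspose_apply, Complex.star_def, mul_comm, Complex.mul_conj]
  rw [e] at h
  have h1 : (1 : Matrix (Fin k) (Fin k) ℂ) i i = 1 := by simp
  rw [h1] at h
  exact_mod_cast h

lemma row_sums {n k : ℕ} (Z : Matrix (Fin n) (Fin k) ℂ) (hZZ : Zᴴ * Z = 1) :
    ∀ j, ∑ i, Complex.normSq (Z j i) ≤ 1 := by
  intro j
  set P := Z * Zᴴ with hPdef
  have hP2 : P * P = P := by
    rw [hPdef, Matrix.mul_assoc, ← Matrix.mul_assoc Zᴴ Z Zᴴ, hZZ, Matrix.one_mul]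
  have hPH : Pᴴ = P := by
    rw [hPdef, Matrix.conjTranspose_mul, Matrix.conjTranspose_conjTranspose]
  set p : ℝ := ∑ i, Complex.normSq (Z j i) with hp
  have hPjj : P j j = (p : ℝ) := by
    rw [hPdef, Matrix.mul_apply, hp]
    push_cast
    apply Finset.sum_congr rfl
    intro i _
    rw [Matrix.conjTranspose_apply, Complex.star_def, Complex.mul_conj]
  have hstar : ∀ t, P t j = star (P j t) := by
    intro t
    have := congrFun (congrFun hPH j) t
    rw [Matrix.conjTranspose_apply] at this
    rw [← this, star_star]
  have hq : P j j = ((∑ t, Complex.normSq (P j t) : ℝ) : ℂ) := by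
    conv_lhs => rw [← hP2]
    rw [Matrix.mul_apply]
    push_cast
    apply Finset.sum_congr rfl
    intro t _
    rw [hstar t, Complex.star_def, Complex.mul_conj]
  have hpq : p = ∑ t, Complex.normSq (P j t) := by
    have := hPjj.symm.trans hq
    exact_mod_cast this
  have hjle : Complex.normSq (P j j) ≤ ∑ t, Complex.normSq (P j t) :=
    Finset.single_le_sum (f := fun t => Complex.normSq (P j t))
      (fun t _ => Complex.normSq_nonneg _) (Finset.mem_univ j)
  rw [hPjj] at hjle
  rw [Complex.normSq_ofReal] at hjle
  have hp0 : 0 ≤ p := Finset.sum_nonneg fun i _ => Complex.normSq_nonneg _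
  nlinarith [hjle, hpq.symm]

/-- Solution of the Brockett cost function minimization on the Stiefel manifold:
the special case `B = I` of the paper's Theorem 2.1. The eigenvalues of the
Hermitian matrix `A` are listed in ascending order via a unitary eigen-decomposition
`Uᴴ A U = diag(λ₁,…,λₙ)`, and those of the Hermitian matrix `D` in descending order
via `Qᴴ D Q = diag(ω₁,…,ω_k)`. -/
theorem brockett_trace_min
    (n k ℓ : ℕ) (hk : 1 ≤ k) (hkn : k ≤ n) (hℓ : ℓ ≤ k)
    (A : Matrix (Fin n) (Fin n) ℂ) (hA : A.IsHermitian)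
    (U : Matrix (Fin n) (Fin n) ℂ) (hU : Uᴴ * U = 1)
    (lam : Fin n → ℝ) (hlam : Monotone lam)
    (hUA : Uᴴ * A * U = Matrix.diagonal fun i => (lam i : ℂ))
    (D : Matrix (Fin k) (Fin k) ℂ) (hD : D.IsHermitian)
    (Q : Matrix (Fin k) (Fin k) ℂ) (hQ : Qᴴ * Q = 1)
    (ω : Fin k → ℝ) (hω : Antitone ω)
    (hQD : Qᴴ * D * Q = Matrix.diagonal fun i => (ω i : ℂ))
    (hωpos : ∀ i : Fin k, (i : ℕ) < ℓ → 0 ≤ ω i)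
    (hωneg : ∀ i : Fin k, ℓ ≤ (i : ℕ) → ω i ≤ 0) :
    (∀ X : Matrix (Fin n) (Fin k) ℂ, Xᴴ * X = 1 →
        ∃ t : ℝ, Matrix.trace (D * (Xᴴ * A * X)) = (t : ℂ)) ∧
    IsLeast {t : ℝ | ∃ X : Matrix (Fin n) (Fin k) ℂ,
        Xᴴ * X = 1 ∧ Matrix.trace (D * (Xᴴ * A * X)) = (t : ℂ)}
      (∑ i : Fin k, ω i *
        (if (i : ℕ) < ℓ then lam (Fin.castLE hkn i)
         else lam ⟨(i : ℕ) + n - k, by have := i.isLt; omega⟩)) := by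
  have hUU : U * Uᴴ = 1 := mul_eq_one_comm.mp hU
  have hQQ : Q * Qᴴ = 1 := mul_eq_one_comm.mp hQ
  -- the trace is always real
  have part1 : ∀ X : Matrix (Fin n) (Fin k) ℂ, Xᴴ * X = 1 →
      ∃ t : ℝ, Matrix.trace (D * (Xᴴ * A * X)) = (t : ℂ) := by
    intro X _
    exact ⟨_, trace_formula A U hU lam hUA D Q hQ ω hQD X⟩
  refine ⟨part1, ?_, ?_⟩
  · -- membership: the minimizer
    set f : Fin k → Fin n := fun i =>
      if h : (i : ℕ) < ℓ then Fin.castLE hkn i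
      else ⟨(i : ℕ) + n - k, by have := i.isLt; omega⟩ with hf
    have hfval : ∀ i : Fin k, ((f i : Fin n) : ℕ)
        = if (i : ℕ) < ℓ then (i : ℕ) else (i : ℕ) + n - k := by
      intro i
      by_cases h : (i : ℕ) < ℓ
      · simp [hf, h]
      · simp [hf, h]
    have hfinj : Function.Injective f := by
      intro a b hab
      have ha := hfval a
      have hb := hfval b
      rw [hab] at ha
      have : (a : ℕ) = (b : ℕ) := by
        rw [hb] at ha
        have hak := a.isLt
        have hbk := b.isLt
        split_ifs at ha <;> omega
      exact Fin.ext this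
    set P : Matrix (Fin n) (Fin k) ℂ := Matrix.of fun j i => if j = f i then 1 else 0 with hP
    have hPP : Pᴴ * P = 1 := by
      ext i i'
      rw [Matrix.mul_apply]
      simp only [hP, Matrix.conjTranspose_apply, Matrix.of_apply]
      have : ∀ j : Fin n, star (if j = f i then (1:ℂ) else 0) * (if j = f i' then (1:ℂ) else 0)
          = if j = f i then (if j = f i' then (1:ℂ) else 0) else 0 := by
        intro j
        by_cases h : j = f i
        · rw [if_pos h, if_pos h, star_one, one_mul]
        · rw [if_neg h, if_neg h, star_zero, zero_mul]
      rw [Finset.sum_congr rfl fun j _ => this j]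
      rw [Finset.sum_ite_eq' Finset.univ (f i) (fun j => if j = f i' then (1:ℂ) else 0)]
      simp only [Finset.mem_univ, if_true]
      by_cases h : i = i'
      · subst h
        simp [Matrix.one_apply]
      · rw [if_neg (fun hc => h (hfinj hc)), Matrix.one_apply_ne h]
    set X₀ : Matrix (Fin n) (Fin k) ℂ := U * P * Qᴴ with hX₀
    have hX₀X₀ : X₀ᴴ * X₀ = 1 := by
      rw [hX₀]
      have e : (U * P * Qᴴ)ᴴ * (U * P * Qᴴ) = Q * (Pᴴ * (Uᴴ * U * (P * Qᴴ))) := by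
        simp only [Matrix.conjTranspose_mul, Matrix.conjTranspose_conjTranspose,
          Matrix.mul_assoc]
      rw [e, hU, Matrix.one_mul, ← Matrix.mul_assoc Pᴴ P Qᴴ, hPP, Matrix.one_mul]
      exact hQQ
    have hZP : Uᴴ * X₀ * Q = P := by
      rw [hX₀]
      have e : Uᴴ * (U * P * Qᴴ) * Q = Uᴴ * U * (P * (Qᴴ * Q)) := by
        simp only [Matrix.mul_assoc]
      rw [e, hU, hQ, Matrix.one_mul, Matrix.mul_one]
    refine ⟨X₀, hX₀X₀, ?_⟩
    rw [trace_formula A U hU lam hUA D Q hQ ω hQD X₀]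
    norm_cast
    rw [hZP]
    apply Finset.sum_congr rfl
    intro i _
    congr 1
    have inner : ∀ j : Fin n, lam j * Complex.normSq (P j i)
        = if j = f i then lam j else 0 := by
      intro j
      simp only [hP, Matrix.of_apply]
      by_cases h : j = f i
      · rw [if_pos h, if_pos h]; simp
      · rw [if_neg h, if_neg h]; simp
    rw [Finset.sum_congr rfl fun j _ => inner j]
    rw [Finset.sum_ite_eq' Finset.univ (f i) lam]
    simp only [Finset.mem_univ, if_true, hf]
    by_cases h : (i : ℕ) < ℓ
    · rw [dif_pos h, if_pos h]
    · rw [dif_neg h, if_neg h]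
  · -- lower bound
    rintro t ⟨X, hXX, htr⟩
    set Z : Matrix (Fin n) (Fin k) ℂ := Uᴴ * X * Q with hZdef
    have hZZ : Zᴴ * Z = 1 := by
      rw [hZdef]
      have e : (Uᴴ * X * Q)ᴴ * (Uᴴ * X * Q)
          = Qᴴ * (Xᴴ * (U * Uᴴ * (X * Q))) := by
        simp only [Matrix.conjTranspose_mul, Matrix.conjTranspose_conjTranspose,
          Matrix.mul_assoc]
      rw [e, hUU, Matrix.one_mul, ← Matrix.mul_assoc Xᴴ X Q, hXX, Matrix.one_mul, hQ]
    set s : Fin n → Fin k → ℝ := fun j i => Complex.normSq (Z j i) with hs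
    have hs0 : ∀ j i, 0 ≤ s j i := fun j i => Complex.normSq_nonneg _
    have hcol : ∀ i, ∑ j, s j i = 1 := col_sums Z hZZ
    have hrow : ∀ j, ∑ i, s j i ≤ 1 := row_sums Z hZZ
    have htr' := trace_formula A U hU lam hUA D Q hQ ω hQD X
    rw [htr] at htr'
    have ht : t = ∑ i : Fin k, ω i * ∑ j : Fin n, lam j * s j i := by
      exact_mod_cast htr'
    rw [ht]
    have key := core_ineq ℓ hk hkn hℓ lam hlam ω hω hωpos hωneg s hs0 hcol hrow
    have bridgeL : ∑ i : Fin k, ω i *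
        (if (i : ℕ) < ℓ then lam (Fin.castLE hkn i)
         else lam ⟨(i : ℕ) + n - k, by have := i.isLt; omega⟩)
        = ∑ i ∈ Finset.range k,
          (if h : i < k then ω ⟨i, h⟩ else 0) *
            (if i < ℓ then lamN lam i else lamN lam (i + n - k)) := by
      rw [← Fin.sum_univ_eq_sum_range (fun i =>
        (if h : i < k then ω ⟨i, h⟩ else 0) *
          (if i < ℓ then lamN lam i else lamN lam (i + n - k))) k]
      apply Finset.sum_congr rfl
      intro i _
      rw [dif_pos i.isLt, Fin.eta]
      congr 1
      by_cases h : (i : ℕ) < ℓ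
      · rw [if_pos h, if_pos h]
        unfold lamN
        rw [dif_pos (by omega : (i:ℕ) < n)]
        congr 1
      · rw [if_neg h, if_neg h]
        unfold lamN
        rw [dif_pos (by have := i.isLt; omega : (i:ℕ) + n - k < n)]
    have bridgeR : ∑ i : Fin k, ω i * ∑ j : Fin n, lam j * s j i
        = ∑ i ∈ Finset.range k, (if h : i < k then ω ⟨i, h⟩ else 0) * cN lam s i := by
      rw [← Fin.sum_univ_eq_sum_range (fun i =>
        (if h : i < k then ω ⟨i, h⟩ else 0) * cN lam s i) k]
      apply Finset.sum_congr rfl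
      intro i _
      rw [dif_pos i.isLt, Fin.eta]
      congr 1
      unfold cN
      rw [dif_pos i.isLt, Fin.eta]
    rw [bridgeL, bridgeR]
    exact key
end

section
/- Let n = p + q + z with p ≥ 1, q ≥ 1, z ≥ 0, and let J = diag(I_p, −I_q, 0_z) ∈ ℂ^{n×n} (block diagonal). Let A, B ∈ ℂ^{n×n} be Hermitian and suppose there exists an invertible U ∈ ℂ^{n×n} with Uᴴ B U = J and Uᴴ A U = diag(a₁, …, aₙ) where all a_i ≥ 0 and a₁ ≤ a₂ ≤ … ≤ a_p (so the positive-type finite eigenvalues of the diagonalizable positive semi-definite pencil A − λB are λ_i⁺ = a_i, i = 1,…,p, in ascending order). Let 1 ≤ k ≤ p and let D ∈ ℂ^{k×k} be Hermitian positive semi-definite with eigenvalues ω₁ ≥ ω₂ ≥ … ≥ ω_k ≥ 0. Then the real number Σ_{i=1}^{k} ω_i a_i is the minimum (a lower bound that is attained) of the set { t ∈ ℝ : ∃ X ∈ ℂ^{n×k}, Xᴴ B X = I_k and t = Re(trace(D Xᴴ A X)) }. -/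
open Matrix
open scoped ComplexOrder MatrixOrder

/-!
After the congruence `X = U Z Qᴴ` the problem reads: minimise `∑ⱼ ωⱼ ∑ᵢ aᵢ |Zᵢⱼ|²` subject to
`Zᴴ J Z = 1`, and the first `k` unit vectors attain `∑ⱼ ωⱼ aⱼ`. For the lower bound, the block
`W` of the first `p` rows of `Z` satisfies `Wᴴ W = 1 + Z₋ᴴ Z₋ ≥ 1`, where `Z₋` collects the rows of
negative type. By Abel summation in the decreasing weights `ω` it suffices to show, for the first
`s` columns `W'` of `W`, that `∑_{j<s} aⱼ ≤ tr (W'ᴴ diag(a) W')`. Writing `W' = V S` with `V` an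
isometry and `S = (W'ᴴ W')^{1/2} ≥ 1`, this trace is at least `tr (Vᴴ diag(a) V) = ∑ᵢ aᵢ cᵢ`, where
the squared row norms `cᵢ` of `V` lie in `[0, 1]` and add up to `s`; as `a` increases, this is at
least `∑_{i<s} aᵢ`.
-/

theorem sum_castLE_eq_sum_ite {M : Type*} [AddCommMonoid M] {n m : ℕ} (h : n ≤ m)
    (f : Fin m → M) :
    ∑ i : Fin n, f (Fin.castLE h i) = ∑ i : Fin m, if (i : ℕ) < n then f i else 0 :=
  Fintype.sum_of_injective _ (Fin.castLE_injective h) _ _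
    (fun i hi => if_neg fun hin => hi ⟨⟨i, hin⟩, rfl⟩) fun i => (if_pos i.isLt).symm

theorem sum_castLE_le_sum {M : Type*} [AddCommMonoid M] [PartialOrder M] [IsOrderedAddMonoid M]
    {n m : ℕ} (h : n ≤ m) {f : Fin m → M} (hf : ∀ i, 0 ≤ f i) :
    ∑ i : Fin n, f (Fin.castLE h i) ≤ ∑ i, f i := by
  rw [sum_castLE_eq_sum_ite h]
  exact Finset.sum_le_sum fun i _ => by split_ifs <;> simp [hf i]

theorem sum_castLE_le_sum_mul_of_monotone {p s : ℕ} (hs : 1 ≤ s) (hsp : s ≤ p) {b : Fin p → ℝ}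
    (hb : Monotone b) {c : Fin p → ℝ} (hc0 : ∀ i, 0 ≤ c i) (hc1 : ∀ i, c i ≤ 1)
    (hcs : ∑ i, c i = s) : ∑ j : Fin s, b (Fin.castLE hsp j) ≤ ∑ i, b i * c i := by
  set t := b ⟨s - 1, by omega⟩
  set ind : Fin p → ℝ := fun i => if (i : ℕ) < s then 1 else 0
  have hind : ∑ i, ind i = s := by simp [ind, ← sum_castLE_eq_sum_ite hsp]
  -- `t` separates the values of `b` below `s` from those above it.
  have hterm : ∀ i, 0 ≤ (b i - t) * (c i - ind i) := by
    intro i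
    by_cases hi : (i : ℕ) < s
    · simp only [ind, if_pos hi]
      exact mul_nonneg_of_nonpos_of_nonpos (sub_nonpos.2 (hb (Fin.le_def.2 (by simp; omega))))
        (sub_nonpos.2 (hc1 i))
    · simp only [ind, if_neg hi, sub_zero]
      exact mul_nonneg (sub_nonneg.2 (hb (Fin.le_def.2 (by simp; omega)))) (hc0 i)
  have hsum := Finset.sum_nonneg fun i (_ : i ∈ Finset.univ) => hterm i
  have hbind : ∑ j : Fin s, b (Fin.castLE hsp j) = ∑ i, b i * ind i := by
    simp [ind, sum_castLE_eq_sum_ite hsp]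
  simp only [sub_mul, mul_sub, Finset.sum_sub_distrib, ← Finset.mul_sum, hind, hcs] at hsum
  linarith

theorem sum_mul_nonneg_of_antitone {k : ℕ} {ω d : Fin k → ℝ} (hω : Antitone ω)
    (hω0 : ∀ i, 0 ≤ ω i) (hd : ∀ m : Fin k, 0 ≤ ∑ j : Fin (m + 1), d (Fin.castLE m.isLt j)) :
    0 ≤ ∑ j, ω j * d j := by
  induction k with
  | zero => simp
  | succ k ih =>
    have hsplit : ∑ j, ω j * d j = ∑ j : Fin k, (ω j.castSucc - ω (Fin.last k)) * d j.castSucc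
        + ω (Fin.last k) * ∑ j, d j := by
      rw [Fin.sum_univ_castSucc, Fin.sum_univ_castSucc d, mul_add, Finset.mul_sum]
      simp only [sub_mul, Finset.sum_sub_distrib]
      ring
    rw [hsplit]
    refine add_nonneg (ih ?_ (fun i => sub_nonneg.2 (hω (Fin.castSucc_lt_last i).le))
      fun m => hd m.castSucc) (mul_nonneg (hω0 _) (hd (Fin.last k)))
    exact fun i j hij => sub_le_sub_right (hω (Fin.castSucc_le_castSucc_iff.2 hij)) _

section Gram

variable {m n : Type*} [Fintype m] [DecidableEq m]

theorem conjTranspose_mul_diagonal_mul_apply_self (d : m → ℝ) (Z : Matrix m n ℂ) (j : n) :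
    (Zᴴ * diagonal (fun i => (d i : ℂ)) * Z) j j
      = ((∑ i, d i * Complex.normSq (Z i j) : ℝ) : ℂ) := by
  rw [Matrix.mul_assoc, mul_apply]
  simp only [diagonal_mul, conjTranspose_apply, Complex.ofReal_sum, Complex.ofReal_mul,
    Complex.normSq_eq_conj_mul_self, Complex.star_def]
  refine Finset.sum_congr rfl fun i _ => ?_
  ring

variable [Fintype n]

theorem re_trace_conjTranspose_mul_diagonal_mul (d : m → ℝ) (Z : Matrix m n ℂ) :
    (trace (Zᴴ * diagonal (fun i => (d i : ℂ)) * Z)).re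
      = ∑ j, ∑ i, d i * Complex.normSq (Z i j) := by
  simp only [trace, diag, conjTranspose_mul_diagonal_mul_apply_self, ← Complex.ofReal_sum,
    Complex.ofReal_re]

theorem re_trace_diagonal_mul_conjTranspose_mul_diagonal_mul [DecidableEq n] (ω : n → ℝ)
    (d : m → ℝ) (Z : Matrix m n ℂ) :
    (trace (diagonal (fun j => (ω j : ℂ)) * (Zᴴ * diagonal (fun i => (d i : ℂ)) * Z))).re
      = ∑ j, ω j * ∑ i, d i * Complex.normSq (Z i j) := by
  simp only [trace, diag, diagonal_mul, conjTranspose_mul_diagonal_mul_apply_self,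
    ← Complex.ofReal_mul, ← Complex.ofReal_sum, Complex.ofReal_re]

theorem sum_sum_normSq_of_conjTranspose_mul_self_eq_one [DecidableEq n] {V : Matrix m n ℂ}
    (hV : Vᴴ * V = 1) : ∑ i, ∑ j, Complex.normSq (V i j) = Fintype.card n := by
  have h := re_trace_conjTranspose_mul_diagonal_mul (fun _ => 1) V
  simp only [Complex.ofReal_one, diagonal_one, Matrix.mul_one, hV, trace_one, one_mul] at h
  rw [Finset.sum_comm, ← h]
  simp

theorem sum_normSq_le_one_of_conjTranspose_mul_self_eq_one [DecidableEq n] {V : Matrix m n ℂ}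
    (hV : Vᴴ * V = 1) (i : m) : ∑ j, Complex.normSq (V i j) ≤ 1 := by
  have hP : (1 - V * Vᴴ)ᴴ * (1 - V * Vᴴ) = 1 - V * Vᴴ := by
    have hidem : V * Vᴴ * (V * Vᴴ) = V * Vᴴ := by
      rw [Matrix.mul_assoc, ← Matrix.mul_assoc Vᴴ, hV, Matrix.one_mul]
    simp only [conjTranspose_sub, conjTranspose_one, conjTranspose_mul,
      conjTranspose_conjTranspose, mul_sub, sub_mul, Matrix.mul_one, Matrix.one_mul, hidem]
    abel
  have hdiag := (hP ▸ posSemidef_conjTranspose_mul_self (1 - V * Vᴴ)).diag_nonneg (i := i)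
  have hVV := conjTranspose_mul_diagonal_mul_apply_self (fun _ => 1) Vᴴ i
  simp only [Complex.ofReal_one, diagonal_one, Matrix.mul_one, conjTranspose_conjTranspose,
    one_mul, conjTranspose_apply, Complex.star_def, Complex.normSq_conj] at hVV
  rwa [Matrix.sub_apply, hVV, one_apply_eq, ← Complex.ofReal_one, ← Complex.ofReal_sub,
    Complex.zero_le_real, sub_nonneg] at hdiag

end Gram

theorem Matrix.PosSemidef.trace_mul_nonneg {n 𝕜 : Type*} [Fintype n] [DecidableEq n] [RCLike 𝕜]
    {M N : Matrix n n 𝕜} (hM : M.PosSemidef) (hN : N.PosSemidef) : 0 ≤ trace (M * N) := by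
  obtain ⟨R, rfl⟩ := CStarAlgebra.nonneg_iff_eq_star_mul_self.mp hN.nonneg
  rw [← Matrix.mul_assoc, trace_mul_cycle]
  exact (hM.mul_mul_conjTranspose_same R).trace_nonneg

theorem exists_isometry_mul_isHermitian {m n 𝕜 : Type*} [Fintype m] [Fintype n] [DecidableEq n]
    [RCLike 𝕜] (W : Matrix m n 𝕜) (hW : (Wᴴ * W).PosDef) :
    ∃ (V : Matrix m n 𝕜) (S : Matrix n n 𝕜),
      Vᴴ * V = 1 ∧ W = V * S ∧ S.IsHermitian ∧ S * S = Wᴴ * W := by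
  set S := CFC.sqrt (Wᴴ * W)
  have hSS : S * S = Wᴴ * W := CFC.sqrt_mul_sqrt_self _ hW.posSemidef.nonneg
  have hS : S.IsHermitian := (CFC.sqrt_nonneg _).posSemidef.isHermitian
  have hdet : IsUnit S.det := (isUnit_iff_isUnit_det S).1 <|
    (CFC.isUnit_sqrt_iff _ hW.posSemidef.nonneg).2 hW.isUnit
  refine ⟨W * S⁻¹, S, ?_, by rw [Matrix.mul_assoc, nonsing_inv_mul _ hdet, Matrix.mul_one],
    hS, hSS⟩
  rw [conjTranspose_mul, conjTranspose_nonsing_inv, hS.eq, Matrix.mul_assoc,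
    ← Matrix.mul_assoc Wᴴ, ← hSS, ← Matrix.mul_assoc, ← Matrix.mul_assoc, nonsing_inv_mul _ hdet,
    Matrix.one_mul, mul_nonsing_inv _ hdet]

theorem one_le_conjTranspose_mul_self_submatrix {m n l 𝕜 : Type*} [Fintype m] [Fintype n]
    [DecidableEq n] [DecidableEq l] [RCLike 𝕜] {W : Matrix m n 𝕜} (hW : 1 ≤ Wᴴ * W) {e : l → n}
    (he : Function.Injective e) : 1 ≤ (W.submatrix id e)ᴴ * W.submatrix id e := by
  have h : ((Wᴴ * W).submatrix e e - (1 : Matrix n n 𝕜).submatrix e e).PosSemidef :=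
    (Matrix.le_iff.mp hW).submatrix e
  rwa [submatrix_one _ he, submatrix_mul _ _ _ id _ Function.bijective_id,
    ← conjTranspose_submatrix] at h

theorem sum_castLE_le_sum_sum_mul_normSq {p s : ℕ} (hs : 1 ≤ s) (hsp : s ≤ p) {b : Fin p → ℝ}
    (hb0 : ∀ i, 0 ≤ b i) (hb : Monotone b) {W : Matrix (Fin p) (Fin s) ℂ} (hW : 1 ≤ Wᴴ * W) :
    ∑ j : Fin s, b (Fin.castLE hsp j) ≤ ∑ j, ∑ i, b i * Complex.normSq (W i j) := by
  have hG : (Wᴴ * W).PosDef := by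
    simpa using PosDef.one.add_posSemidef (Matrix.le_iff.mp hW)
  obtain ⟨V, S, hV, rfl, hS, hSS⟩ := exists_isometry_mul_isHermitian W hG
  set B := diagonal fun i => (b i : ℂ)
  have hT : (Vᴴ * B * V).PosSemidef :=
    (PosSemidef.diagonal fun i => Complex.zero_le_real.2 (hb0 i)).conjTranspose_mul_mul_same V
  have htrace : trace ((V * S)ᴴ * B * (V * S))
      = trace (Vᴴ * B * V) + trace (((V * S)ᴴ * (V * S) - 1) * (Vᴴ * B * V)) := by
    rw [← hSS, Matrix.sub_mul, Matrix.one_mul, trace_sub, add_sub_cancel, conjTranspose_mul,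
      hS.eq, ← Matrix.mul_assoc, trace_mul_comm]
    simp only [Matrix.mul_assoc]
  calc ∑ j : Fin s, b (Fin.castLE hsp j)
      ≤ ∑ i, b i * ∑ j, Complex.normSq (V i j) :=
        sum_castLE_le_sum_mul_of_monotone hs hsp hb
          (fun i => Finset.sum_nonneg fun j _ => Complex.normSq_nonneg _)
          (sum_normSq_le_one_of_conjTranspose_mul_self_eq_one hV)
          (by rw [sum_sum_normSq_of_conjTranspose_mul_self_eq_one hV, Fintype.card_fin])
    _ = (trace (Vᴴ * B * V)).re := by
        rw [re_trace_conjTranspose_mul_diagonal_mul, Finset.sum_comm]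
        simp only [Finset.mul_sum]
    _ ≤ (trace ((V * S)ᴴ * B * (V * S))).re := by
        rw [htrace, Complex.add_re, le_add_iff_nonneg_right]
        exact (Complex.nonneg_iff.1 ((Matrix.le_iff.mp hW).trace_mul_nonneg hT)).1
    _ = ∑ j, ∑ i, b i * Complex.normSq ((V * S) i j) :=
        re_trace_conjTranspose_mul_diagonal_mul _ _

theorem sum_mul_castLE_le_sum_mul_sum_mul_normSq {p k : ℕ} (hkp : k ≤ p) {b : Fin p → ℝ}
    (hb0 : ∀ i, 0 ≤ b i) (hb : Monotone b) {ω : Fin k → ℝ} (hω : Antitone ω)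
    (hω0 : ∀ i, 0 ≤ ω i) {W : Matrix (Fin p) (Fin k) ℂ} (hW : 1 ≤ Wᴴ * W) :
    ∑ j, ω j * b (Fin.castLE hkp j) ≤ ∑ j, ω j * ∑ i, b i * Complex.normSq (W i j) := by
  have h := sum_mul_nonneg_of_antitone hω hω0
    (d := fun j => ∑ i, b i * Complex.normSq (W i j) - b (Fin.castLE hkp j)) fun m => by
      rw [Finset.sum_sub_distrib, sub_nonneg]
      exact sum_castLE_le_sum_sum_mul_normSq m.succ_pos (m.isLt.trans_le hkp) hb0 hb
        (one_le_conjTranspose_mul_self_submatrix hW (Fin.castLE_injective m.isLt))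
  simpa only [mul_sub, Finset.sum_sub_distrib, sub_nonneg] using h

theorem conjTranspose_mul_self_submatrix_castLE {n R : Type*} [Semiring R] [StarRing R]
    {N p : ℕ} (h : p ≤ N) (Z : Matrix (Fin N) n R) :
    (Z.submatrix (Fin.castLE h) id)ᴴ * Z.submatrix (Fin.castLE h) id
      = Zᴴ * diagonal (fun i : Fin N => if (i : ℕ) < p then (1 : R) else 0) * Z := by
  ext j l
  rw [Matrix.mul_assoc, mul_apply, mul_apply]
  simp only [conjTranspose_apply, submatrix_apply, id, diagonal_mul, ite_mul, one_mul, zero_mul,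
    mul_ite, mul_zero]
  exact sum_castLE_eq_sum_ite h fun i => star (Z i j) * Z i l

theorem one_le_conjTranspose_mul_self_submatrix_castLE {n 𝕜 : Type*} [Fintype n] [DecidableEq n]
    [RCLike 𝕜] {N p : ℕ} (h : p ≤ N) {Z : Matrix (Fin N) n 𝕜} {d : Fin N → 𝕜}
    (hd : ∀ i, d i ≤ if (i : ℕ) < p then 1 else 0) (hZ : Zᴴ * diagonal d * Z = 1) :
    1 ≤ (Z.submatrix (Fin.castLE h) id)ᴴ * Z.submatrix (Fin.castLE h) id := by
  rw [conjTranspose_mul_self_submatrix_castLE, ← hZ, Matrix.le_iff, ← Matrix.sub_mul,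
    ← Matrix.mul_sub, diagonal_sub]
  exact (PosSemidef.diagonal fun i => sub_nonneg.2 (hd i)).conjTranspose_mul_mul_same Z

theorem submatrix_one_conjTranspose_mul_mul {l n R : Type*} [Fintype n] [DecidableEq n]
    [Semiring R] [StarRing R] (e : l → n) (M : Matrix n n R) :
    ((1 : Matrix n n R).submatrix id e)ᴴ * M * (1 : Matrix n n R).submatrix id e
      = M.submatrix e e := by
  ext i j
  simp [mul_apply, one_apply]

theorem setOf_re_trace_eq_of_congruence {n m : Type*} [Fintype n] [DecidableEq n] [Fintype m]
    [DecidableEq m] {A B U J Λ : Matrix n n ℂ} {D Q Ω : Matrix m m ℂ} (hU : IsUnit U)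
    (hQ : Qᴴ * Q = 1) (hUB : Uᴴ * B * U = J) (hUA : Uᴴ * A * U = Λ) (hQD : Qᴴ * D * Q = Ω) :
    {t : ℝ | ∃ X : Matrix n m ℂ, Xᴴ * B * X = 1 ∧ t = (trace (D * (Xᴴ * A * X))).re}
      = {t : ℝ | ∃ Z : Matrix n m ℂ, Zᴴ * J * Z = 1 ∧ t = (trace (Ω * (Zᴴ * Λ * Z))).re} := by
  have hQQ : Q * Qᴴ = 1 := mul_eq_one_comm.mp hQ
  have hcongr : ∀ (M : Matrix n n ℂ) (Z : Matrix n m ℂ),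
      (U * Z * Qᴴ)ᴴ * M * (U * Z * Qᴴ) = Q * (Zᴴ * (Uᴴ * M * U) * Z) * Qᴴ := by
    intro M Z
    simp only [conjTranspose_mul, conjTranspose_conjTranspose, Matrix.mul_assoc]
  have hone : ∀ M : Matrix m m ℂ, Q * M * Qᴴ = 1 ↔ M = 1 := by
    refine fun M => ⟨fun h => ?_, fun h => by rw [h, Matrix.mul_one, hQQ]⟩
    calc M = Qᴴ * (Q * M * Qᴴ) * Q := by
          simp only [← Matrix.mul_assoc, hQ, Matrix.one_mul]
          rw [Matrix.mul_assoc, hQ, Matrix.mul_one]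
      _ = 1 := by rw [h, Matrix.mul_one, hQ]
  have htrace : ∀ M : Matrix m m ℂ, trace (D * (Q * M * Qᴴ)) = trace (Ω * M) := by
    intro M
    rw [← hQD, ← Matrix.mul_assoc, ← Matrix.mul_assoc, trace_mul_comm]
    simp only [Matrix.mul_assoc]
  ext t
  constructor
  · rintro ⟨X, hX, rfl⟩
    obtain ⟨Z, rfl⟩ : ∃ Z, X = U * Z * Qᴴ := ⟨U⁻¹ * X * Q, by
      rw [Matrix.mul_assoc, Matrix.mul_assoc, hQQ, Matrix.mul_one, ← Matrix.mul_assoc,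
        mul_nonsing_inv _ ((isUnit_iff_isUnit_det U).1 hU), Matrix.one_mul]⟩
    rw [hcongr, hUB, hone] at hX
    exact ⟨Z, hX, by rw [hcongr, hUA, htrace]⟩
  · rintro ⟨Z, hZ, rfl⟩
    exact ⟨U * Z * Qᴴ, by rw [hcongr, hUB, hZ, hone], by rw [hcongr, hUA, htrace]⟩

/-- The paper's Theorem 3.1 in the diagonalizable case: for a positive semi-definite
pencil `A - λB` with `Uᴴ B U = J = diag(I_p, -I_q, 0_z)` and `Uᴴ A U = diag(a₁,…,aₙ) ⪰ 0`
(the positive-type eigenvalues `a₁ ≤ … ≤ a_p` ascending), and `D ⪰ 0` Hermitian with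
eigenvalues `ω₁ ≥ … ≥ ω_k ≥ 0`, `k ≤ p`, the quantity `∑ ω_i a_i` is the minimum of
`Re(trace (D Xᴴ A X))` over `Xᴴ B X = I_k`. -/
theorem trace_inf_indefinite_B_pos_constraint
    (p q z k : ℕ) (hkp : k ≤ p)
    (A B : Matrix (Fin (p + q + z)) (Fin (p + q + z)) ℂ)
    (U : Matrix (Fin (p + q + z)) (Fin (p + q + z)) ℂ) (hU : IsUnit U)
    (a : Fin (p + q + z) → ℝ) (ha : ∀ i, 0 ≤ a i)
    (hsort : ∀ i j : Fin (p + q + z), i ≤ j → (j : ℕ) < p → a i ≤ a j)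
    (hUB : Uᴴ * B * U = Matrix.diagonal fun i : Fin (p + q + z) =>
      if (i : ℕ) < p then (1 : ℂ) else if (i : ℕ) < p + q then -1 else 0)
    (hUA : Uᴴ * A * U = Matrix.diagonal fun i => (a i : ℂ))
    (D : Matrix (Fin k) (Fin k) ℂ)
    (Q : Matrix (Fin k) (Fin k) ℂ) (hQ : Qᴴ * Q = 1)
    (ω : Fin k → ℝ) (hω : Antitone ω) (hω0 : ∀ i, 0 ≤ ω i)
    (hQD : Qᴴ * D * Q = Matrix.diagonal fun i => (ω i : ℂ)) :
    IsLeast {t : ℝ | ∃ X : Matrix (Fin (p + q + z)) (Fin k) ℂ,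
        Xᴴ * B * X = 1 ∧ t = (Matrix.trace (D * (Xᴴ * A * X))).re}
      (∑ i : Fin k, ω i * a ⟨(i : ℕ), by have := i.isLt; omega⟩) := by
  have hpN : p ≤ p + q + z := by omega
  have hkN : k ≤ p + q + z := by omega
  rw [setOf_re_trace_eq_of_congruence hU hQ hUB hUA hQD]
  refine ⟨⟨(1 : Matrix _ _ ℂ).submatrix id (Fin.castLE hkN), ?_, ?_⟩, ?_⟩
  · rw [submatrix_one_conjTranspose_mul_mul, submatrix_diagonal _ _ (Fin.castLE_injective hkN),
      ← diagonal_one]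
    exact congrArg diagonal (funext fun j => by simp [j.isLt.trans_le hkp])
  · rw [submatrix_one_conjTranspose_mul_mul, submatrix_diagonal _ _ (Fin.castLE_injective hkN),
      diagonal_mul_diagonal, trace_diagonal, Complex.re_sum]
    simp only [Function.comp, ← Complex.ofReal_mul, Complex.ofReal_re]
    rfl
  · rintro t ⟨Z, hZ, rfl⟩
    have hW := one_le_conjTranspose_mul_self_submatrix_castLE hpN
      (fun i => by split_ifs <;> norm_num) hZ
    rw [re_trace_diagonal_mul_conjTranspose_mul_diagonal_mul]
    calc ∑ j, ω j * a ⟨j, _⟩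
        ≤ ∑ j, ω j * ∑ i : Fin p,
            a (Fin.castLE hpN i) * Complex.normSq (Z (Fin.castLE hpN i) j) :=
          sum_mul_castLE_le_sum_mul_sum_mul_normSq hkp (b := fun i => a (Fin.castLE hpN i))
            (fun i => ha _) (fun i j hij => hsort _ _ hij j.isLt) hω hω0 hW
      _ ≤ ∑ j, ω j * ∑ i, a i * Complex.normSq (Z i j) :=
          Finset.sum_le_sum fun j _ => mul_le_mul_of_nonneg_left
            (sum_castLE_le_sum hpN (f := fun i => a i * Complex.normSq (Z i j))
              fun i => mul_nonneg (ha i) (Complex.normSq_nonneg _)) (hω0 j)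
end
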